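/- arXiv:2206.02701 — 5 statements merged into one kernel-verified Lean document; each statement's English description precedes it below -/
import Mathlib

section
/- For all integers n, d, i with d ≥ 1, n ≥ 2d and i ≥ 0, the identity Σ_{k=0}^{d−1} (−1)^{d+i−k−1} binom(n−d, d+i−k) · binom(n−d+k−1, k) = (−1)^i binom(n−1, d+i) · binom(d+i−1, i) holds in ℤ. -/
open Nat

-- generic-case factorial identity
lemma aux1 (c j t : ℕ) :
    (j + t + c + 3).choose (c + j + 2) * (c + j + 1).choose j
      + (j + t + c + 2).choose (c + j + 2) * (c + j + 1).choose (j + 1)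
      = (j + t + 2).choose (j + 1) * (j + t + c + 2).choose (c + 1) := by
  have key : ((j + t + c + 3).choose (c + j + 2) * (c + j + 1).choose j
      + (j + t + c + 2).choose (c + j + 2) * (c + j + 1).choose (j + 1) : ℚ)
      = ((j + t + 2).choose (j + 1) : ℚ) * ((j + t + c + 2).choose (c + 1) : ℚ) := by
    rw [Nat.cast_choose ℚ (show c + j + 2 ≤ j + t + c + 3 by omega),
        Nat.cast_choose ℚ (show j ≤ c + j + 1 by omega),
        Nat.cast_choose ℚ (show c + j + 2 ≤ j + t + c + 2 by omega),
        Nat.cast_choose ℚ (show j + 1 ≤ c + j + 1 by omega),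
        Nat.cast_choose ℚ (show j + 1 ≤ j + t + 2 by omega),
        Nat.cast_choose ℚ (show c + 1 ≤ j + t + c + 2 by omega),
        show j + t + c + 3 - (c + j + 2) = t + 1 by omega,
        show c + j + 1 - j = c + 1 by omega,
        show j + t + c + 2 - (c + j + 2) = t by omega,
        show c + j + 1 - (j + 1) = c by omega,
        show j + t + 2 - (j + 1) = t + 1 by omega,
        show j + t + c + 2 - (c + 1) = j + t + 1 by omega]
    have f1 : (j + t + c + 3)! = (j + t + c + 3) * (j + t + c + 2)! := by
      rw [show j + t + c + 3 = (j + t + c + 2) + 1 by omega, Nat.factorial_succ]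
    have f2 : (c + j + 2)! = (c + j + 2) * (c + j + 1)! := by
      rw [show c + j + 2 = (c + j + 1) + 1 by omega, Nat.factorial_succ]
    have f3 : (t + 1)! = (t + 1) * t ! := Nat.factorial_succ t
    have f4 : (j + 1)! = (j + 1) * j ! := Nat.factorial_succ j
    have f5 : (c + 1)! = (c + 1) * c ! := Nat.factorial_succ c
    have f6 : (j + t + 2)! = (j + t + 2) * (j + t + 1)! := by
      rw [show j + t + 2 = (j + t + 1) + 1 by omega, Nat.factorial_succ]
    rw [f1, f2, f3, f4, f5, f6]
    push_cast
    have nz : ∀ x : ℕ, ((x)! : ℚ) ≠ 0 := fun x => by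
      exact_mod_cast Nat.factorial_ne_zero x
    have h1 := nz (j + t + c + 2)
    have h2 := nz (c + j + 1)
    have h3 := nz t
    have h4 := nz j
    have h5 := nz c
    have h6 := nz (j + t + 1)
    have p1 : ((c : ℚ) + j + 2) ≠ 0 := by positivity
    have p2 : ((t : ℚ) + 1) ≠ 0 := by positivity
    have p3 : ((j : ℚ) + 1) ≠ 0 := by positivity
    have p4 : ((c : ℚ) + 1) ≠ 0 := by positivity
    field_simp
    ring
  exact_mod_cast key

lemma step (m N K : ℕ) (hK : 1 ≤ K) (hKN : K < N) :
    (m + K).choose N * (N - 1).choose (N - K - 1)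
      + (m + K - 1).choose N * (N - 1).choose (N - K)
      = m.choose (N - K) * (m + K - 1).choose K := by
  obtain ⟨c, rfl⟩ : ∃ c, K = c + 1 := ⟨K - 1, by omega⟩
  obtain ⟨j, rfl⟩ : ∃ j, N = c + j + 2 := ⟨N - c - 2, by omega⟩
  rw [show c + j + 2 - 1 = c + j + 1 by omega,
      show c + j + 2 - (c + 1) - 1 = j by omega,
      show c + j + 2 - (c + 1) = j + 1 by omega]
  rcases lt_or_ge (j + 1) m with hm | hm
  · obtain ⟨t, rfl⟩ : ∃ t, m = j + t + 2 := ⟨m - j - 2, by omega⟩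
    rw [show j + t + 2 + (c + 1) = j + t + c + 3 by omega,
        show j + t + c + 3 - 1 = j + t + c + 2 by omega]
    exact aux1 c j t
  · rcases eq_or_lt_of_le hm with hm' | hm'
    · obtain rfl : m = j + 1 := hm'
      rw [show j + 1 + (c + 1) = c + j + 2 by omega,
          show c + j + 2 - 1 = c + j + 1 by omega]
      rw [Nat.choose_self, Nat.choose_self,
          Nat.choose_eq_zero_of_lt (show c + j + 1 < c + j + 2 by omega)]
      have := Nat.choose_symm (show c + 1 ≤ c + j + 1 by omega)
      rw [show c + j + 1 - (c + 1) = j by omega] at this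
      simpa using this
    · have z1 : m.choose (j + 1) = 0 := Nat.choose_eq_zero_of_lt (by omega)
      have z2 : (m + (c + 1)).choose (c + j + 2) = 0 :=
        Nat.choose_eq_zero_of_lt (by omega)
      have z3 : (m + (c + 1) - 1).choose (c + j + 2) = 0 :=
        Nat.choose_eq_zero_of_lt (by omega)
      have z4 : (m + c).choose (c + j + 2) = 0 :=
        Nat.choose_eq_zero_of_lt (by omega)
      simp [z1, z2, z3, z4]

lemma partial_sum (m N : ℕ) :
    ∀ K, 1 ≤ K → K ≤ N →
      ∑ k ∈ Finset.range K,
          (-1 : ℤ) ^ k * (m.choose (N - k)) * ((m + k - 1).choose k)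
        = (-1 : ℤ) ^ (K - 1) * ((m + K - 1).choose N) * ((N - 1).choose (N - K)) := by
  intro K
  induction K with
  | zero => omega
  | succ K ih =>
    intro _ hKN
    rcases Nat.eq_zero_or_pos K with rfl | hK'
    · simp [Nat.choose_self]
    · have hKN' : K ≤ N := by omega
      rw [Finset.sum_range_succ, ih hK' hKN']
      have hs := step m N K hK' (by omega : K < N)
      have hsz : ((m + K).choose N : ℤ) * ((N - 1).choose (N - K - 1) : ℤ)
          + ((m + K - 1).choose N : ℤ) * ((N - 1).choose (N - K) : ℤ)
          = (m.choose (N - K) : ℤ) * ((m + K - 1).choose K : ℤ) := by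
        exact_mod_cast hs
      obtain ⟨K', rfl⟩ : ∃ K', K = K' + 1 := ⟨K - 1, by omega⟩
      rw [show K' + 1 - 1 = K' by omega, show K' + 1 + 1 - 1 = K' + 1 by omega,
          show m + (K' + 1 + 1) - 1 = m + (K' + 1) by omega,
          show N - (K' + 1 + 1) = N - (K' + 1) - 1 by omega]
      rw [pow_succ]
      linear_combination ((-1 : ℤ) ^ K') * hsz

/-- For all integers `n, d, i` with `d ≥ 1`, `n ≥ 2d` and `i ≥ 0`, we have
`Σ_{k=0}^{d−1} (−1)^{d+i−k−1} C(n−d, d+i−k) C(n−d+k−1, k) = (−1)^i C(n−1, d+i) C(d+i−1, i)`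
in `ℤ`.  (Here all the parameters are nonnegative, so they are encoded as natural
numbers; `Nat.choose a b = 0` when `b > a`, matching the stated convention.) -/
theorem specht_alternating_binomial_identity (n d i : ℕ) (hd : 1 ≤ d) (hn : 2 * d ≤ n) :
    ∑ k ∈ Finset.range d,
        (-1 : ℤ) ^ (d + i - k - 1) * ((n - d).choose (d + i - k)) * ((n - d + k - 1).choose k)
      = (-1 : ℤ) ^ i * ((n - 1).choose (d + i)) * ((d + i - 1).choose i) := by
  set m : ℕ := n - d with hm
  set N : ℕ := d + i with hN
  have hdm : d ≤ m := by omega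
  have key : ∑ k ∈ Finset.range d,
      (-1 : ℤ) ^ (N - k - 1) * ((m.choose (N - k) : ℤ)) * (((m + k - 1).choose k : ℤ))
      = (-1 : ℤ) ^ (N - 1) * ∑ k ∈ Finset.range d,
          (-1 : ℤ) ^ k * ((m.choose (N - k) : ℤ)) * (((m + k - 1).choose k : ℤ)) := by
    rw [Finset.mul_sum]
    refine Finset.sum_congr rfl fun k hk => ?_
    have hkd : k < d := Finset.mem_range.mp hk
    have h2 : (-1 : ℤ) ^ (N - k - 1) = (-1) ^ (N - 1) * (-1) ^ k := by
      have h3 : (-1 : ℤ) ^ (N - 1) = (-1) ^ (N - k - 1) * (-1) ^ k := by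
        rw [← pow_add]
        congr 1
        omega
      rw [h3, mul_assoc, ← pow_add, ← two_mul, pow_mul]
      norm_num
    rw [h2]
    ring
  rw [key, partial_sum m N d hd (by omega)]
  rw [show m + d - 1 = n - 1 by omega, show N - d = i by omega]
  rw [← mul_assoc, ← mul_assoc, ← pow_add,
      show (N - 1) + (d - 1) = 2 * (d - 1) + i by omega, pow_add, pow_mul]
  norm_num
end

section
/- For all integers n, d, i with d ≥ 2 and 0 ≤ i ≤ n−d, the identity binom(n−1, d+i) · binom(d+i−1, i) − binom(n−d, i) · binom(n−1, d−2) = n! · (n−2d−i+1) / ((n−d−i)! · (d−1)! · i! · (n−d+1) · (d+i)) holds in ℚ, where the integer factor (n−2d−i+1) may be negative. -/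
lemma cc (p q : ℕ) : (((p + q).choose q : ℕ) : ℚ)
    = ((p + q).factorial : ℚ) / ((q.factorial : ℚ) * (p.factorial : ℚ)) := by
  rw [Nat.cast_choose ℚ (Nat.le_add_left q p), Nat.add_sub_cancel]

/-- For all integers `n, d, i` with `d ≥ 2` and `0 ≤ i ≤ n − d`, we have
`C(n−1, d+i)·C(d+i−1, i) − C(n−d, i)·C(n−1, d−2)
  = n!·(n−2d−i+1) / ((n−d−i)!·(d−1)!·i!·(n−d+1)·(d+i))`
in `ℚ`, where the factor `n−2d−i+1` may be negative (so it is computed in `ℚ`).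
(The nonnegative parameters are encoded as natural numbers; `Nat.choose a b = 0`
when `b > a`, matching the stated convention.) -/
theorem specht_betti_difference_formula (n d i : ℕ) (hd : 2 ≤ d) (hi : d + i ≤ n) :
    ((n - 1).choose (d + i) * (d + i - 1).choose i : ℚ)
      - ((n - d).choose i * (n - 1).choose (d - 2) : ℚ)
    = (n.factorial : ℚ) * ((n : ℚ) - 2 * d - i + 1) /
        (((n - d - i).factorial : ℚ) * ((d - 1).factorial : ℚ) * (i.factorial : ℚ) *
          ((n - d + 1 : ℕ) : ℚ) * ((d + i : ℕ) : ℚ)) := by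
  obtain ⟨a, rfl⟩ : ∃ a, d = a + 2 := ⟨d - 2, by omega⟩
  obtain ⟨m, rfl⟩ : ∃ m, n = a + 2 + i + m := ⟨n - (a + 2 + i), by omega⟩
  rcases m with _ | m
  · -- n = a + 2 + i : first binomial is 0
    rw [show a + 2 + i + 0 - 1 = a + i + 1 by omega]
    rw [show (a + 2) + i = a + i + 2 by omega]
    rw [Nat.choose_eq_zero_of_lt (by omega : a + i + 1 < a + i + 2)]
    rw [show a + i + 2 + 0 - (a + 2) = 0 + i by omega]
    rw [show a + i + 1 = (i + 1) + a by omega, show (a + 2) - 2 = a by omega]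
    rw [cc, cc]
    rw [show 0 + i - i = 0 by omega]
    rw [show 0 + i + 1 = i + 1 by omega]
    rw [show (a + 2) - 1 = a + 1 by omega]
    rw [show a + i + 2 + 0 = (a + i + 1) + 1 by omega]
    rw [show (i + 1) + a = (a + i) + 1 by omega]
    rw [show 0 + i = i by omega]
    rw [Nat.factorial_succ (a + i + 1), Nat.factorial_succ (a + i),
      Nat.factorial_succ a, Nat.factorial_succ i, Nat.factorial_zero]
    have hI : (i.factorial : ℚ) ≠ 0 := by positivity
    have hA : (a.factorial : ℚ) ≠ 0 := by positivity
    have hF : ((a + i).factorial : ℚ) ≠ 0 := by positivity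
    push_cast
    field_simp
    ring
  · -- n = a + 2 + i + (m + 1)
    rw [show a + 2 + i + (m + 1) - 1 = m + (a + i + 2) by omega]
    rw [show (a + 2) + i = a + i + 2 by omega]
    rw [show a + i + 2 - 1 = (a + 1) + i by omega]
    rw [show a + i + 2 + (m + 1) - (a + 2) = (m + 1) + i by omega]
    rw [show (a + 2) - 2 = a by omega]
    rw [cc, cc, cc]
    rw [show m + (a + i + 2) = (i + m + 2) + a by omega]
    rw [cc]
    rw [show m + 1 + i - i = m + 1 by omega]
    rw [show m + 1 + i + 1 = i + m + 2 by omega]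
    rw [show (a + 2) - 1 = a + 1 by omega]
    rw [show a + i + 2 + (m + 1) = (a + i + m + 2) + 1 by omega]
    rw [show (i + m + 2) + a = (a + i + m + 1) + 1 by omega]
    rw [show a + i + 2 = (a + i + 1) + 1 by omega]
    rw [show (a + 1) + i = (a + i) + 1 by omega]
    rw [show (m + 1) + i = (i + m) + 1 by omega]
    rw [show i + m + 2 = (i + m + 1) + 1 by omega]
    rw [Nat.factorial_succ (a + i + m + 2), Nat.factorial_succ (a + i + m + 1),
      Nat.factorial_succ (a + i + 1), Nat.factorial_succ (a + i),
      Nat.factorial_succ (i + m + 1), Nat.factorial_succ (i + m),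
      Nat.factorial_succ a, Nat.factorial_succ m]
    have hI : (i.factorial : ℚ) ≠ 0 := by positivity
    have hA : (a.factorial : ℚ) ≠ 0 := by positivity
    have hM : (m.factorial : ℚ) ≠ 0 := by positivity
    have h1 : ((a + i).factorial : ℚ) ≠ 0 := by positivity
    have h2 : ((i + m).factorial : ℚ) ≠ 0 := by positivity
    have h3 : (((a + i + m + 1).factorial : ℕ) : ℚ) ≠ 0 := by positivity
    push_cast
    field_simp
    ring
end

section
/- For all integers n, d, i with d ≥ 1 and 0 ≤ i ≤ n−2d, the number of standard Young tableaux of shape (n−d−i, d, 1^i) equals n! · (n−2d−i+1) / ((n−d−i)! · (d−1)! · i! · (n−d+1) · (d+i)). -/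
noncomputable section

/-- The set of cells `(row, column)` (0-indexed) of the Young diagram of a partition,
given as the list of its row lengths. -/
def youngCells (lam : List ℕ) : Finset (ℕ × ℕ) :=
  (Finset.range lam.length).biUnion fun r => (Finset.range (lam.getD r 0)).image fun c => (r, c)

/-- A (Young) tableau of shape `lam` with entries in `Fin n`, encoded as a function
on all of `ℕ × ℕ` that restricts to a bijection from the cells of the diagram onto `Fin n`. -/
def IsTableau (n : ℕ) (lam : List ℕ) (E : ℕ × ℕ → Fin n) : Prop :=
  Set.BijOn E (youngCells lam : Set (ℕ × ℕ)) Set.univ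

/-- A standard filling: rows increase left to right and columns increase top to bottom. -/
def IsStandard (n : ℕ) (lam : List ℕ) (E : ℕ × ℕ → Fin n) : Prop :=
  ∀ p ∈ youngCells lam, ∀ q ∈ youngCells lam,
    ((p.1 = q.1 ∧ p.2 < q.2) ∨ (p.2 = q.2 ∧ p.1 < q.1)) → E p < E q

/-- The number of standard Young tableaux of shape `lam` (fillings are normalized to
take the value `0` outside the diagram, so that each tableau is counted exactly once). -/
def sytCount (n : ℕ) (lam : List ℕ) : ℕ :=
  Nat.card {E : ℕ × ℕ → Fin n // IsTableau n lam E ∧ IsStandard n lam E ∧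
    ∀ p ∉ youngCells lam, (E p : ℕ) = 0}

def rel (p q : ℕ × ℕ) : Prop := (p.1 = q.1 ∧ p.2 < q.2) ∨ (p.2 = q.2 ∧ p.1 < q.1)

def Pr (n : ℕ) (S : Finset (ℕ × ℕ)) (E : ℕ × ℕ → Fin n) : Prop :=
  Set.BijOn E (S : Set (ℕ × ℕ)) Set.univ ∧
    (∀ p ∈ S, ∀ q ∈ S, rel p q → E p < E q) ∧ ∀ p ∉ S, (E p : ℕ) = 0

lemma sytCount_eq (n : ℕ) (lam : List ℕ) :
    sytCount n lam = Nat.card {E : ℕ × ℕ → Fin n // Pr n (youngCells lam) E} := rfl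

lemma mem_youngCells {lam : List ℕ} {p : ℕ × ℕ} :
    p ∈ youngCells lam ↔ p.2 < lam.getD p.1 0 := by
  constructor
  · intro hp
    simp only [youngCells, Finset.mem_biUnion, Finset.mem_range, Finset.mem_image] at hp
    obtain ⟨r, hr, c, hc, rfl⟩ := hp
    exact hc
  · intro hp
    simp only [youngCells, Finset.mem_biUnion, Finset.mem_range, Finset.mem_image]
    refine ⟨p.1, ?_, p.2, hp, rfl⟩
    by_contra h
    rw [List.getD_eq_default] at hp
    · omega
    · omega

lemma mem_shape {a d i : ℕ} {p : ℕ × ℕ} :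
    p ∈ youngCells (a :: d :: List.replicate i 1) ↔
      (p.1 = 0 ∧ p.2 < a) ∨ (p.1 = 1 ∧ p.2 < d) ∨ (2 ≤ p.1 ∧ p.1 < i + 2 ∧ p.2 = 0) := by
  rw [mem_youngCells]
  obtain ⟨r, c⟩ := p
  match r with
  | 0 => simp
  | 1 => simp
  | (Nat.succ (Nat.succ r)) =>
    simp only [List.getD_cons_succ]
    rcases lt_or_ge r i with h | h
    · rw [List.getD_eq_getElem _ _ (by simpa using h)]
      simp [List.getElem_replicate]
      omega
    · rw [List.getD_eq_default _ _ (by simpa using h)]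
      omega

lemma finite_aux (n : ℕ) (S : Finset (ℕ × ℕ)) (q : (ℕ × ℕ → Fin n) → Prop)
    (hq : ∀ E, q E → ∀ p ∉ S, (E p : ℕ) = 0) : Finite {E : ℕ × ℕ → Fin n // q E} := by
  refine Finite.of_injective (fun E => (fun s => E.1 s : S → Fin n)) ?_
  rintro ⟨E₁, h₁⟩ ⟨E₂, h₂⟩ h
  ext p
  by_cases hp : p ∈ S
  · exact congrArg Fin.val (congrFun h ⟨p, hp⟩)
  · rw [hq E₁ h₁ p hp, hq E₂ h₂ p hp]

lemma val_lt {m : ℕ} {S : Finset (ℕ × ℕ)} {c : ℕ × ℕ} (hc : c ∈ S)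
    {E : ℕ × ℕ → Fin (m + 1)} (hE : Pr (m + 1) S E) (hEc : E c = Fin.last m)
    {p : ℕ × ℕ} (hp : p ∈ S.erase c) : (E p : ℕ) < m := by
  obtain ⟨hpc, hpS⟩ := Finset.mem_erase.mp hp
  have h1 : (E p : ℕ) < m + 1 := (E p).isLt
  rcases lt_or_eq_of_le (Nat.lt_succ_iff.mp h1) with h | h
  · exact h
  · exfalso
    apply hpc
    apply hE.1.2.1 (by exact_mod_cast hpS) (by exact_mod_cast hc)
    rw [hEc]
    exact Fin.ext h


def shrink (m : ℕ) (hm : 0 < m) (S : Finset (ℕ × ℕ)) (c : ℕ × ℕ)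
    (E : ℕ × ℕ → Fin (m + 1)) : ℕ × ℕ → Fin m :=
  fun z => if z ∈ S.erase c then ⟨min (E z : ℕ) (m - 1), by omega⟩ else ⟨0, hm⟩

lemma shrink_val {m : ℕ} (hm : 0 < m) {S : Finset (ℕ × ℕ)} {c : ℕ × ℕ} (hc : c ∈ S)
    {E : ℕ × ℕ → Fin (m + 1)} (hE : Pr (m + 1) S E) (hEc : E c = Fin.last m)
    {z : ℕ × ℕ} (hz : z ∈ S.erase c) : (shrink m hm S c E z : ℕ) = (E z : ℕ) := by
  have h1 := val_lt hc hE hEc hz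
  simp only [shrink, hz, if_true]
  omega

lemma shrink_val_zero {m : ℕ} (hm : 0 < m) {S : Finset (ℕ × ℕ)} {c : ℕ × ℕ}
    {E : ℕ × ℕ → Fin (m + 1)} {z : ℕ × ℕ} (hz : z ∉ S.erase c) :
    (shrink m hm S c E z : ℕ) = 0 := by
  simp only [shrink, hz, if_false]

lemma shrink_pr {m : ℕ} (hm : 0 < m) {S : Finset (ℕ × ℕ)} {c : ℕ × ℕ} (hc : c ∈ S)
    {E : ℕ × ℕ → Fin (m + 1)} (hE : Pr (m + 1) S E) (hEc : E c = Fin.last m) :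
    Pr m (S.erase c) (shrink m hm S c E) := by
  obtain ⟨hbij, hstd, hnorm⟩ := hE
  refine ⟨⟨fun p _ => Set.mem_univ _, ?_, ?_⟩, ?_, ?_⟩
  · intro p hp q hq heq
    rw [Finset.mem_coe] at hp hq
    have h1 : (E p : ℕ) = (E q : ℕ) := by
      rw [← shrink_val hm hc ⟨hbij, hstd, hnorm⟩ hEc hp,
        ← shrink_val hm hc ⟨hbij, hstd, hnorm⟩ hEc hq, heq]
    exact hbij.2.1 (Finset.mem_coe.mpr (Finset.mem_of_mem_erase hp))
      (Finset.mem_coe.mpr (Finset.mem_of_mem_erase hq)) (Fin.ext h1)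
  · intro v _
    obtain ⟨p, hpS, hpE⟩ := hbij.2.2 (Set.mem_univ (⟨(v : ℕ), by omega⟩ : Fin (m + 1)))
    rw [Finset.mem_coe] at hpS
    have hpc : p ≠ c := by
      intro h; subst h
      rw [hEc] at hpE
      have := congrArg Fin.val hpE
      simp [Fin.last] at this
      omega
    have hpe : p ∈ S.erase c := Finset.mem_erase.mpr ⟨hpc, hpS⟩
    refine ⟨p, Finset.mem_coe.mpr hpe, Fin.ext ?_⟩
    rw [shrink_val hm hc ⟨hbij, hstd, hnorm⟩ hEc hpe]
    simpa using congrArg Fin.val hpE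
  · intro p hp q hq hrel
    have h1 := hstd p (Finset.mem_of_mem_erase hp) q (Finset.mem_of_mem_erase hq) hrel
    have h2 := shrink_val hm hc ⟨hbij, hstd, hnorm⟩ hEc hp
    have h3 := shrink_val hm hc ⟨hbij, hstd, hnorm⟩ hEc hq
    have h4 : (E p : ℕ) < (E q : ℕ) := h1
    exact Fin.lt_def.mpr (by omega)
  · intro p hp
    exact shrink_val_zero hm hp

lemma card_remove (m : ℕ) (hm : 1 ≤ m) (S : Finset (ℕ × ℕ)) (c : ℕ × ℕ) (hc : c ∈ S)
    (hcorner : ∀ q ∈ S, ¬ rel c q) :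
    Nat.card {E : ℕ × ℕ → Fin (m + 1) // Pr (m + 1) S E ∧ E c = Fin.last m}
      = Nat.card {E : ℕ × ℕ → Fin m // Pr m (S.erase c) E} := by
  have h0m : (0 : ℕ) < m := hm
  refine Nat.card_eq_of_bijective
    (fun E => ⟨shrink m h0m S c E.1, shrink_pr h0m hc E.2.1 E.2.2⟩) ⟨?_, ?_⟩
  · -- injective
    rintro ⟨E₁, h₁, hc₁⟩ ⟨E₂, h₂, hc₂⟩ heq
    have heq' := congrArg Subtype.val heq
    simp only at heq'
    refine Subtype.ext (funext fun z => ?_)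
    show E₁ z = E₂ z
    by_cases hz : z ∈ S.erase c
    · have h3 := congrArg Fin.val (congrFun heq' z)
      rw [shrink_val h0m hc h₁ hc₁ hz, shrink_val h0m hc h₂ hc₂ hz] at h3
      exact Fin.ext h3
    · by_cases hzc : z = c
      · rw [hzc, hc₁, hc₂]
      · have hzS : z ∉ S := fun h => hz (Finset.mem_erase.mpr ⟨hzc, h⟩)
        exact Fin.ext ((h₁.2.2 z hzS).trans (h₂.2.2 z hzS).symm)
  · -- surjective
    rintro ⟨E', hE'⟩
    obtain ⟨hbij', hstd', hnorm'⟩ := hE'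
    set E : ℕ × ℕ → Fin (m + 1) := fun z => if z = c then Fin.last m else (E' z).castSucc
      with hEdef
    have hEc : E c = Fin.last m := by simp [hEdef]
    have hEne : ∀ z, z ≠ c → E z = (E' z).castSucc := by
      intro z hz; simp [hEdef, hz]
    have hPr : Pr (m + 1) S E := by
      refine ⟨⟨fun p _ => Set.mem_univ _, ?_, ?_⟩, ?_, ?_⟩
      · -- InjOn
        intro x hx y hy heq
        rw [Finset.mem_coe] at hx hy
        by_cases hxc : x = c
        · by_cases hyc : y = c
          · rw [hxc, hyc]
          · exfalso
            rw [hxc, hEc, hEne y hyc] at heq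
            have := congrArg Fin.val heq
            simp [Fin.last] at this
            exact absurd this.symm (Nat.ne_of_lt (E' y).isLt)
        · by_cases hyc : y = c
          · exfalso
            rw [hyc, hEc, hEne x hxc] at heq
            have := congrArg Fin.val heq
            simp [Fin.last] at this
            exact absurd this (Nat.ne_of_lt (E' x).isLt)
          · rw [hEne x hxc, hEne y hyc] at heq
            exact hbij'.2.1 (Finset.mem_coe.mpr (Finset.mem_erase.mpr ⟨hxc, hx⟩))
              (Finset.mem_coe.mpr (Finset.mem_erase.mpr ⟨hyc, hy⟩))
              (Fin.castSucc_injective m heq)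
      · -- SurjOn
        intro v _
        by_cases hv : (v : ℕ) = m
        · exact ⟨c, Finset.mem_coe.mpr hc, by rw [hEc]; exact Fin.ext (by simp [Fin.last, hv])⟩
        · have hvm : (v : ℕ) < m := by have := v.isLt; omega
          obtain ⟨z, hze, hzE⟩ := hbij'.2.2 (Set.mem_univ (⟨(v : ℕ), hvm⟩ : Fin m))
          rw [Finset.mem_coe] at hze
          have hzc : z ≠ c := (Finset.mem_erase.mp hze).1
          refine ⟨z, Finset.mem_coe.mpr (Finset.mem_of_mem_erase hze), ?_⟩
          rw [hEne z hzc]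
          exact Fin.ext (by simpa using congrArg Fin.val hzE)
      · -- standard
        intro x hx y hy hrel
        by_cases hxc : x = c
        · exact absurd hrel (by rw [hxc]; exact hcorner y hy)
        · rw [hEne x hxc]
          by_cases hyc : y = c
          · subst hyc
            rw [hEc]
            exact Fin.castSucc_lt_last _
          · rw [hEne y hyc]
            have := hstd' x (Finset.mem_erase.mpr ⟨hxc, hx⟩) y
              (Finset.mem_erase.mpr ⟨hyc, hy⟩) hrel
            exact_mod_cast this
      · -- norm
        intro z hzS
        have hzc : z ≠ c := fun h => hzS (h ▸ hc)
        rw [hEne z hzc]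
        simpa using hnorm' z (fun h => hzS (Finset.mem_of_mem_erase h))
    refine ⟨⟨E, hPr, hEc⟩, ?_⟩
    refine Subtype.ext (funext fun z => Fin.ext ?_)
    by_cases hz : z ∈ S.erase c
    · rw [shrink_val h0m hc hPr hEc hz, hEne z (Finset.mem_erase.mp hz).1]
      simp
    · rw [shrink_val_zero h0m hz]
      exact (hnorm' z hz).symm

open Classical in
noncomputable def cornersOf (S : Finset (ℕ × ℕ)) : Finset (ℕ × ℕ) :=
  S.filter fun c => ∀ q ∈ S, ¬ rel c q

lemma mem_cornersOf {S : Finset (ℕ × ℕ)} {c : ℕ × ℕ} :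
    c ∈ cornersOf S ↔ c ∈ S ∧ ∀ q ∈ S, ¬ rel c q := by
  simp [cornersOf]

lemma finite_pr (n : ℕ) (S : Finset (ℕ × ℕ)) (q : Fin n → Prop) :
    Finite {E : ℕ × ℕ → Fin n // Pr n S E ∧ q (E default)} :=
  finite_aux n S _ fun E hE => hE.1.2.2

lemma card_partition (m : ℕ) (S : Finset (ℕ × ℕ)) :
    Nat.card {E : ℕ × ℕ → Fin (m + 1) // Pr (m + 1) S E}
      = ∑ c ∈ cornersOf S,
          Nat.card {E : ℕ × ℕ → Fin (m + 1) // Pr (m + 1) S E ∧ E c = Fin.last m} := by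
  classical
  haveI hfin : ∀ c : ℕ × ℕ, Finite {E : ℕ × ℕ → Fin (m + 1) // Pr (m + 1) S E ∧ E c = Fin.last m} :=
    fun c => finite_aux _ S _ (fun E hE => hE.1.2.2)
  haveI hfin0 : Finite {E : ℕ × ℕ → Fin (m + 1) // Pr (m + 1) S E} :=
    finite_aux _ S _ (fun E hE => hE.2.2)
  have step1 : Nat.card {E : ℕ × ℕ → Fin (m + 1) // Pr (m + 1) S E}
      = Nat.card (Σ c : ↥(cornersOf S),
          {E : ℕ × ℕ → Fin (m + 1) // Pr (m + 1) S E ∧ E c.1 = Fin.last m}) := by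
    refine (Nat.card_eq_of_bijective (fun x => ⟨x.2.1, x.2.2.1⟩) ⟨?_, ?_⟩).symm
    · rintro ⟨⟨c₁, hc₁⟩, E₁, hE₁, hl₁⟩ ⟨⟨c₂, hc₂⟩, E₂, hE₂, hl₂⟩ h
      have hEE : E₁ = E₂ := congrArg Subtype.val h
      subst hEE
      have hcc : c₁ = c₂ := by
        apply hE₁.1.2.1 (Finset.mem_coe.mpr (mem_cornersOf.mp hc₁).1)
          (Finset.mem_coe.mpr (mem_cornersOf.mp hc₂).1)
        rw [hl₁, hl₂]
      subst hcc
      rfl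
    · rintro ⟨E, hE⟩
      obtain ⟨c, hcS, hcE⟩ := hE.1.2.2 (Set.mem_univ (Fin.last m))
      rw [Finset.mem_coe] at hcS
      have hcorner : ∀ q ∈ S, ¬ rel c q := by
        intro q hq hrel
        have h1 := hE.2.1 c hcS q hq hrel
        rw [hcE] at h1
        exact absurd (Fin.le_last (E q)) (not_le.mpr h1)
      exact ⟨⟨⟨c, mem_cornersOf.mpr ⟨hcS, hcorner⟩⟩, ⟨E, hE, hcE⟩⟩, rfl⟩
  rw [step1]
  haveI : ∀ c : ↥(cornersOf S), Fintype
      {E : ℕ × ℕ → Fin (m + 1) // Pr (m + 1) S E ∧ E c.1 = Fin.last m} :=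
    fun c => Fintype.ofFinite _
  rw [Nat.card_eq_fintype_card, Fintype.card_sigma]
  rw [← Finset.sum_coe_sort (cornersOf S)
    (fun c => Nat.card {E : ℕ × ℕ → Fin (m + 1) // Pr (m + 1) S E ∧ E c = Fin.last m})]
  exact Finset.sum_congr rfl fun c _ => (Nat.card_eq_fintype_card).symm

lemma mem_row {m : ℕ} {p : ℕ × ℕ} : p ∈ youngCells [m] ↔ p.1 = 0 ∧ p.2 < m := by
  rw [mem_youngCells]
  obtain ⟨r, c⟩ := p
  match r with
  | 0 => simp
  | (Nat.succ r) =>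
    simp only [List.getD_cons_succ]
    rw [List.getD_eq_default _ _ (by simp)]
    omega

lemma row_count (m : ℕ) (hm : 1 ≤ m) :
    Nat.card {E : ℕ × ℕ → Fin m // Pr m (youngCells [m]) E} = 1 := by
  have h0m : 0 < m := hm
  set E₀ : ℕ × ℕ → Fin m := fun p => if h : p.1 = 0 ∧ p.2 < m then ⟨p.2, h.2⟩ else ⟨0, h0m⟩
    with hE₀
  have hPr : Pr m (youngCells [m]) E₀ := by
    refine ⟨⟨fun p _ => Set.mem_univ _, ?_, ?_⟩, ?_, ?_⟩
    · intro p hp q hq heq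
      rw [Finset.mem_coe, mem_row] at hp hq
      simp only [hE₀, hp, hq, and_self, dite_true, Fin.mk.injEq] at heq
      exact Prod.ext (hp.1.trans hq.1.symm) heq
    · intro v _
      refine ⟨(0, (v : ℕ)), Finset.mem_coe.mpr (mem_row.mpr ⟨rfl, v.isLt⟩), ?_⟩
      simp [hE₀, v.isLt]
    · intro p hp q hq hrel
      rw [mem_row] at hp hq
      simp only [hE₀, hp, hq, and_self, dite_true]
      rcases hrel with ⟨_, h⟩ | ⟨_, h⟩
      · exact h
      · omega
    · intro p hp
      rw [mem_row] at hp
      simp only [hE₀, hp, dite_false]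
  have huniq : ∀ E : ℕ × ℕ → Fin m, Pr m (youngCells [m]) E → E = E₀ := by
    intro E hE
    obtain ⟨hbij, hstd, hnorm⟩ := hE
    set f : Fin m → Fin m := fun x => E (0, (x : ℕ)) with hf
    have hmono : StrictMono f := by
      intro x y hxy
      exact hstd (0, x) (mem_row.mpr ⟨rfl, x.isLt⟩) (0, y) (mem_row.mpr ⟨rfl, y.isLt⟩)
        (Or.inl ⟨rfl, hxy⟩)
    have hsurj : Function.Surjective f := by
      intro v
      obtain ⟨p, hpS, hpE⟩ := hbij.2.2 (Set.mem_univ v)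
      rw [Finset.mem_coe, mem_row] at hpS
      obtain ⟨p1, p2⟩ := p
      obtain ⟨h1, h2⟩ := hpS
      refine ⟨⟨p2, h2⟩, ?_⟩
      simp only [hf]
      rw [← hpE]
      simp only at h1
      rw [h1]
    haveI : WellFoundedLT (Fin m) := Finite.to_wellFoundedLT
    have hid : f = id := by
      refine (hmono.range_inj strictMono_id).mp ?_
      rw [Set.range_eq_univ.mpr hsurj, Set.range_id]
    funext p
    by_cases hp : p ∈ youngCells [m]
    · rw [mem_row] at hp
      have h1 : f ⟨p.2, hp.2⟩ = E p := by
        simp only [hf]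
        congr 1
        exact Prod.ext hp.1.symm rfl
      have h2 : f ⟨p.2, hp.2⟩ = ⟨p.2, hp.2⟩ := by rw [hid]; rfl
      rw [← h1, h2]
      simp only [hE₀, hp, and_self, dite_true]
    · have h1 := hnorm p hp
      rw [mem_row] at hp
      refine Fin.ext ?_
      rw [h1]
      simp only [hE₀, hp, dite_false]
  haveI : Finite {E : ℕ × ℕ → Fin m // Pr m (youngCells [m]) E} :=
    finite_aux _ _ _ (fun E hE => hE.2.2)
  rw [Nat.card_eq_one_iff_unique]
  constructor
  · constructor
    rintro ⟨E₁, h₁⟩ ⟨E₂, h₂⟩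
    exact Subtype.ext ((huniq E₁ h₁).trans (huniq E₂ h₂).symm)
  · exact ⟨⟨E₀, hPr⟩⟩

lemma mem_corners_shape {a d i : ℕ} {c : ℕ × ℕ} (hd : 1 ≤ d) (hda : d ≤ a) :
    c ∈ cornersOf (youngCells (a :: d :: List.replicate i 1)) ↔
      (d < a ∧ c = (0, a - 1)) ∨ ((2 ≤ d ∨ i = 0) ∧ c = (1, d - 1)) ∨
        (1 ≤ i ∧ c = (i + 1, 0)) := by
  rw [mem_cornersOf]
  constructor
  · rintro ⟨hcS, hco⟩
    rw [mem_shape] at hcS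
    obtain ⟨r, cc⟩ := c
    rcases hcS with ⟨h1, h2⟩ | ⟨h1, h2⟩ | ⟨h1, h2, h3⟩
    · left
      simp only at h1 h2
      subst h1
      have e1 : cc + 1 < a → False := fun h =>
        hco (0, cc + 1) (mem_shape.mpr (Or.inl ⟨rfl, h⟩)) (Or.inl ⟨rfl, Nat.lt_succ_self _⟩)
      have e2 : cc < d → False := fun h =>
        hco (1, cc) (mem_shape.mpr (Or.inr (Or.inl ⟨rfl, h⟩))) (Or.inr ⟨rfl, Nat.zero_lt_one⟩)
      have h3 : a ≤ cc + 1 := by by_contra hcon; exact e1 (by omega)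
      have h4 : d ≤ cc := by by_contra hcon; exact e2 (by omega)
      refine ⟨by omega, ?_⟩
      simp only [Prod.mk.injEq]
      exact ⟨trivial, by omega⟩
    · right; left
      simp only at h1 h2
      subst h1
      have e1 : cc + 1 < d → False := fun h =>
        hco (1, cc + 1) (mem_shape.mpr (Or.inr (Or.inl ⟨rfl, h⟩)))
          (Or.inl ⟨rfl, Nat.lt_succ_self _⟩)
      have e2 : cc = 0 → 1 ≤ i → False := fun h hi =>
        hco (2, 0) (mem_shape.mpr (Or.inr (Or.inr ⟨le_refl 2, by show 2 < i + 2; omega, rfl⟩)))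
          (Or.inr (by simp [h]))
      have h3 : d ≤ cc + 1 := by by_contra hcon; exact e1 (by omega)
      have h5 : 2 ≤ d ∨ i = 0 := by
        by_contra hcon
        push_neg at hcon
        exact e2 (by omega) (by omega)
      refine ⟨h5, ?_⟩
      simp only [Prod.mk.injEq]
      exact ⟨trivial, by omega⟩
    · right; right
      simp only at h1 h2 h3
      subst h3
      have e1 : r + 1 < i + 2 → False := fun h =>
        hco (r + 1, 0) (mem_shape.mpr (Or.inr (Or.inr ⟨by omega, h, rfl⟩)))
          (Or.inr ⟨rfl, Nat.lt_succ_self _⟩)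
      have h4 : i + 2 ≤ r + 1 := by by_contra hcon; exact e1 (by omega)
      refine ⟨by omega, ?_⟩
      simp only [Prod.mk.injEq]
      exact ⟨by omega, trivial⟩
  · intro H
    constructor
    · rw [mem_shape]
      rcases H with ⟨h1, rfl⟩ | ⟨h1, rfl⟩ | ⟨h1, rfl⟩
      · exact Or.inl ⟨rfl, by omega⟩
      · exact Or.inr (Or.inl ⟨rfl, by omega⟩)
      · exact Or.inr (Or.inr ⟨by omega, by omega, rfl⟩)
    · intro q hq hrel
      rw [mem_shape] at hq
      obtain ⟨q1, q2⟩ := q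
      rcases H with ⟨h1, rfl⟩ | ⟨h1, rfl⟩ | ⟨h1, rfl⟩ <;>
        rcases hrel with ⟨e1, e2⟩ | ⟨e1, e2⟩ <;>
          rcases hq with ⟨f1, f2⟩ | ⟨f1, f2⟩ | ⟨f1, f2, f3⟩ <;>
            simp only at e1 e2 f1 f2 <;> omega

lemma erase_c1 {a d i : ℕ} (hd : 1 ≤ d) (hda : d < a) :
    (youngCells (a :: d :: List.replicate i 1)).erase (0, a - 1)
      = youngCells ((a - 1) :: d :: List.replicate i 1) := by
  ext ⟨r, c⟩
  simp only [Finset.mem_erase, mem_shape, Ne, Prod.mk.injEq, not_and]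
  constructor
  · rintro ⟨h1, h2⟩
    rcases h2 with ⟨f1, f2⟩ | ⟨f1, f2⟩ | ⟨f1, f2, f3⟩ <;> [skip; skip; skip] <;>
      first
        | (left; refine ⟨f1, ?_⟩; by_cases hr : r = 0
           · have := h1 hr; omega
           · omega)
        | (right; left; exact ⟨f1, f2⟩)
        | (right; right; exact ⟨f1, f2, f3⟩)
  · rintro (⟨f1, f2⟩ | ⟨f1, f2⟩ | ⟨f1, f2, f3⟩) <;>
      refine ⟨by omega, ?_⟩ <;> omega

lemma erase_c2 {a d i : ℕ} (hd : 1 ≤ d) :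
    (youngCells (a :: d :: List.replicate i 1)).erase (1, d - 1)
      = youngCells (a :: (d - 1) :: List.replicate i 1) := by
  ext ⟨r, c⟩
  simp only [Finset.mem_erase, mem_shape, Ne, Prod.mk.injEq, not_and]
  constructor
  · rintro ⟨h1, h2⟩
    by_cases hr : r = 1
    · have := h1 hr
      omega
    · omega
  · intro h
    refine ⟨by omega, by omega⟩

lemma erase_c3 {a d i : ℕ} (hi : 1 ≤ i) :
    (youngCells (a :: d :: List.replicate i 1)).erase (i + 1, 0)
      = youngCells (a :: d :: List.replicate (i - 1) 1) := by
  ext ⟨r, c⟩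
  simp only [Finset.mem_erase, mem_shape, Ne, Prod.mk.injEq, not_and]
  constructor
  · rintro ⟨h1, h2⟩
    by_cases hr : r = i + 1
    · have := h1 hr
      omega
    · omega
  · intro h
    refine ⟨by omega, by omega⟩

lemma erase_c2_row {a : ℕ} :
    (youngCells (a :: 1 :: List.replicate 0 1)).erase (1, 0) = youngCells [a] := by
  ext ⟨r, c⟩
  simp only [Finset.mem_erase, mem_shape, mem_row, Ne, Prod.mk.injEq, not_and]
  constructor
  · rintro ⟨h1, h2⟩
    by_cases hr : r = 1
    · have := h1 hr
      omega
    · omega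
  · intro h
    exact ⟨by omega, by omega⟩

lemma syt_rec (a d i m : ℕ) (hd : 1 ≤ d) (hda : d ≤ a) (hm : a + d + i = m + 1)
    (hm1 : 1 ≤ m) :
    sytCount (m + 1) (a :: d :: List.replicate i 1)
      = (if d < a then sytCount m ((a - 1) :: d :: List.replicate i 1) else 0)
        + (if 2 ≤ d then sytCount m (a :: (d - 1) :: List.replicate i 1)
            else if i = 0 then 1 else 0)
        + (if 1 ≤ i then sytCount m (a :: d :: List.replicate (i - 1) 1) else 0) := by
  set S := youngCells (a :: d :: List.replicate i 1) with hS
  rw [sytCount_eq, card_partition]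
  -- corner term evaluations
  have hcor : ∀ c : ℕ × ℕ, c ∈ cornersOf S → c ∈ S ∧ ∀ q ∈ S, ¬ rel c q :=
    fun c hc => mem_cornersOf.mp hc
  have term1 : d < a →
      Nat.card {E : ℕ × ℕ → Fin (m + 1) // Pr (m + 1) S E ∧ E (0, a - 1) = Fin.last m}
        = sytCount m ((a - 1) :: d :: List.replicate i 1) := by
    intro h
    have hmem : (0, a - 1) ∈ cornersOf S := (mem_corners_shape hd hda).mpr (Or.inl ⟨h, rfl⟩)
    obtain ⟨h1, h2⟩ := hcor _ hmem
    rw [card_remove m hm1 S _ h1 h2, hS, erase_c1 hd h, ← sytCount_eq]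
  have term2 : 2 ≤ d →
      Nat.card {E : ℕ × ℕ → Fin (m + 1) // Pr (m + 1) S E ∧ E (1, d - 1) = Fin.last m}
        = sytCount m (a :: (d - 1) :: List.replicate i 1) := by
    intro h
    have hmem : (1, d - 1) ∈ cornersOf S :=
      (mem_corners_shape hd hda).mpr (Or.inr (Or.inl ⟨Or.inl h, rfl⟩))
    obtain ⟨h1, h2⟩ := hcor _ hmem
    rw [card_remove m hm1 S _ h1 h2, hS, erase_c2 hd, ← sytCount_eq]
  have term2' : d = 1 → i = 0 →
      Nat.card {E : ℕ × ℕ → Fin (m + 1) // Pr (m + 1) S E ∧ E (1, d - 1) = Fin.last m}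
        = 1 := by
    intro h h'
    have hmem : (1, d - 1) ∈ cornersOf S :=
      (mem_corners_shape hd hda).mpr (Or.inr (Or.inl ⟨Or.inr h', rfl⟩))
    obtain ⟨h1, h2⟩ := hcor _ hmem
    rw [card_remove m hm1 S _ h1 h2, hS]
    subst h h'
    rw [erase_c2_row]
    have ham : a = m := by omega
    rw [ham]
    exact row_count m hm1
  have term3 : 1 ≤ i →
      Nat.card {E : ℕ × ℕ → Fin (m + 1) // Pr (m + 1) S E ∧ E (i + 1, 0) = Fin.last m}
        = sytCount m (a :: d :: List.replicate (i - 1) 1) := by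
    intro h
    have hmem : (i + 1, 0) ∈ cornersOf S :=
      (mem_corners_shape hd hda).mpr (Or.inr (Or.inr ⟨h, rfl⟩))
    obtain ⟨h1, h2⟩ := hcor _ hmem
    rw [card_remove m hm1 S _ h1 h2, hS, erase_c3 h, ← sytCount_eq]
  have notmem2 : ((0 : ℕ), a - 1) ∉ ({(1, d - 1)} : Finset (ℕ × ℕ)) := by
    simp only [Finset.mem_singleton, Prod.mk.injEq]
    omega
  have notmem3 : ((0 : ℕ), a - 1) ∉ ({(i + 1, 0)} : Finset (ℕ × ℕ)) := by
    simp only [Finset.mem_singleton, Prod.mk.injEq]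
    omega
  have notmem23 : ((1 : ℕ), d - 1) ∉ ({(i + 1, 0)} : Finset (ℕ × ℕ)) → True := fun _ => trivial
  rcases Nat.lt_or_ge d a with h₁ | h₁ <;> rcases Nat.lt_or_ge d 2 with h₂ | h₂ <;>
    rcases Nat.eq_zero_or_pos i with h₃ | h₃
  · -- d < a, d = 1, i = 0
    have hd1 : d = 1 := by omega
    have hcs : cornersOf S = {(0, a - 1), (1, d - 1)} := by
      ext c
      rw [mem_corners_shape hd hda]
      simp only [Finset.mem_insert, Finset.mem_singleton]
      constructor
      · rintro (⟨_, rfl⟩ | ⟨_, rfl⟩ | ⟨hi1, rfl⟩)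
        · exact Or.inl rfl
        · exact Or.inr rfl
        · omega
      · rintro (rfl | rfl)
        · exact Or.inl ⟨h₁, rfl⟩
        · exact Or.inr (Or.inl ⟨Or.inr h₃, rfl⟩)
    rw [hcs, Finset.sum_insert notmem2, Finset.sum_singleton]
    rw [term1 h₁, term2' hd1 h₃]
    rw [if_pos h₁, if_neg (show ¬ 2 ≤ d by omega), if_pos h₃,
      if_neg (show ¬ 1 ≤ i by omega)]
  · -- d < a, d = 1, i ≥ 1
    have hcs : cornersOf S = {(0, a - 1), (i + 1, 0)} := by
      ext c
      rw [mem_corners_shape hd hda]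
      simp only [Finset.mem_insert, Finset.mem_singleton]
      constructor
      · rintro (⟨_, rfl⟩ | ⟨hc2, rfl⟩ | ⟨_, rfl⟩)
        · exact Or.inl rfl
        · omega
        · exact Or.inr rfl
      · rintro (rfl | rfl)
        · exact Or.inl ⟨h₁, rfl⟩
        · exact Or.inr (Or.inr ⟨h₃, rfl⟩)
    rw [hcs, Finset.sum_insert notmem3, Finset.sum_singleton]
    rw [term1 h₁, term3 h₃]
    rw [if_pos h₁, if_neg (show ¬ 2 ≤ d by omega), if_neg (show ¬ i = 0 by omega),
      if_pos (show 1 ≤ i from h₃)]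
    simp
  · -- d < a, d ≥ 2, i = 0
    have hcs : cornersOf S = {(0, a - 1), (1, d - 1)} := by
      ext c
      rw [mem_corners_shape hd hda]
      simp only [Finset.mem_insert, Finset.mem_singleton]
      constructor
      · rintro (⟨_, rfl⟩ | ⟨_, rfl⟩ | ⟨hi1, rfl⟩)
        · exact Or.inl rfl
        · exact Or.inr rfl
        · omega
      · rintro (rfl | rfl)
        · exact Or.inl ⟨h₁, rfl⟩
        · exact Or.inr (Or.inl ⟨Or.inl h₂, rfl⟩)
    rw [hcs, Finset.sum_insert notmem2, Finset.sum_singleton]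
    rw [term1 h₁, term2 h₂]
    rw [if_pos h₁, if_pos h₂, if_neg (show ¬ 1 ≤ i by omega)]
    simp
  · -- d < a, d ≥ 2, i ≥ 1
    have notmem' : ((1 : ℕ), d - 1) ∉ ({(i + 1, 0)} : Finset (ℕ × ℕ)) := by
      simp only [Finset.mem_singleton, Prod.mk.injEq]
      omega
    have notmem'' : ((0 : ℕ), a - 1) ∉
        (insert ((1 : ℕ), d - 1) {((i : ℕ) + 1, (0 : ℕ))} : Finset (ℕ × ℕ)) := by
      simp only [Finset.mem_insert, Finset.mem_singleton, Prod.mk.injEq]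
      omega
    have hcs : cornersOf S = {(0, a - 1), (1, d - 1), (i + 1, 0)} := by
      ext c
      rw [mem_corners_shape hd hda]
      simp only [Finset.mem_insert, Finset.mem_singleton]
      constructor
      · rintro (⟨_, rfl⟩ | ⟨_, rfl⟩ | ⟨_, rfl⟩)
        · exact Or.inl rfl
        · exact Or.inr (Or.inl rfl)
        · exact Or.inr (Or.inr rfl)
      · rintro (rfl | rfl | rfl)
        · exact Or.inl ⟨h₁, rfl⟩
        · exact Or.inr (Or.inl ⟨Or.inl h₂, rfl⟩)
        · exact Or.inr (Or.inr ⟨h₃, rfl⟩)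
    rw [hcs, Finset.sum_insert notmem'', Finset.sum_insert notmem', Finset.sum_singleton]
    rw [term1 h₁, term2 h₂, term3 h₃]
    rw [if_pos h₁, if_pos h₂, if_pos (show 1 ≤ i from h₃)]
    ring
  · -- a = d, d = 1, i = 0
    have hd1 : d = 1 := by omega
    have hcs : cornersOf S = {(1, d - 1)} := by
      ext c
      rw [mem_corners_shape hd hda]
      simp only [Finset.mem_singleton]
      constructor
      · rintro (⟨hc1, rfl⟩ | ⟨_, rfl⟩ | ⟨hi1, rfl⟩)
        · omega
        · rfl
        · omega
      · rintro rfl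
        exact Or.inr (Or.inl ⟨Or.inr h₃, rfl⟩)
    rw [hcs, Finset.sum_singleton]
    rw [term2' hd1 h₃]
    rw [if_neg (show ¬ d < a by omega), if_neg (show ¬ 2 ≤ d by omega), if_pos h₃,
      if_neg (show ¬ 1 ≤ i by omega)]
  · -- a = d, d = 1, i ≥ 1
    have hcs : cornersOf S = {(i + 1, 0)} := by
      ext c
      rw [mem_corners_shape hd hda]
      simp only [Finset.mem_singleton]
      constructor
      · rintro (⟨hc1, rfl⟩ | ⟨hc2, rfl⟩ | ⟨_, rfl⟩)
        · omega
        · omega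
        · rfl
      · rintro rfl
        exact Or.inr (Or.inr ⟨h₃, rfl⟩)
    rw [hcs, Finset.sum_singleton]
    rw [term3 h₃]
    rw [if_neg (show ¬ d < a by omega), if_neg (show ¬ 2 ≤ d by omega),
      if_neg (show ¬ i = 0 by omega), if_pos (show 1 ≤ i from h₃)]
    simp
  · -- a = d, d ≥ 2, i = 0
    have hcs : cornersOf S = {(1, d - 1)} := by
      ext c
      rw [mem_corners_shape hd hda]
      simp only [Finset.mem_singleton]
      constructor
      · rintro (⟨hc1, rfl⟩ | ⟨_, rfl⟩ | ⟨hi1, rfl⟩)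
        · omega
        · rfl
        · omega
      · rintro rfl
        exact Or.inr (Or.inl ⟨Or.inl h₂, rfl⟩)
    rw [hcs, Finset.sum_singleton]
    rw [term2 h₂]
    rw [if_neg (show ¬ d < a by omega), if_pos h₂, if_neg (show ¬ 1 ≤ i by omega)]
    simp
  · -- a = d, d ≥ 2, i ≥ 1
    have notmem' : ((1 : ℕ), d - 1) ∉ ({(i + 1, 0)} : Finset (ℕ × ℕ)) := by
      simp only [Finset.mem_singleton, Prod.mk.injEq]
      omega
    have hcs : cornersOf S = {(1, d - 1), (i + 1, 0)} := by
      ext c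
      rw [mem_corners_shape hd hda]
      simp only [Finset.mem_insert, Finset.mem_singleton]
      constructor
      · rintro (⟨hc1, rfl⟩ | ⟨_, rfl⟩ | ⟨_, rfl⟩)
        · omega
        · exact Or.inl rfl
        · exact Or.inr rfl
      · rintro (rfl | rfl)
        · exact Or.inr (Or.inl ⟨Or.inl h₂, rfl⟩)
        · exact Or.inr (Or.inr ⟨h₃, rfl⟩)
    rw [hcs, Finset.sum_insert notmem', Finset.sum_singleton]
    rw [term2 h₂, term3 h₃]
    rw [if_neg (show ¬ d < a by omega), if_pos h₂, if_pos (show 1 ≤ i from h₃)]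
    simp

set_option maxHeartbeats 1600000 in
lemma key : ∀ m : ℕ, ∀ a d i : ℕ, 1 ≤ d → d ≤ a → a + d + i = m →
    (sytCount m (a :: d :: List.replicate i 1) : ℚ)
      = ((m.factorial : ℚ) * (((a - d + 1 : ℕ)) : ℚ)) /
          ((a.factorial : ℚ) * ((d - 1).factorial : ℚ) * (i.factorial : ℚ) *
            ((a + i + 1 : ℕ) : ℚ) * ((d + i : ℕ) : ℚ)) := by
  intro m
  induction m using Nat.strong_induction_on with
  | _ m IH =>
    intro a d i hd hda hm
    have hm2 : 2 ≤ m := by omega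
    obtain ⟨N, rfl⟩ : ∃ N, m = N + 1 := ⟨m - 1, by omega⟩
    rw [syt_rec a d i N hd hda hm (by omega)]
    have hfv : ∀ k : ℕ, ((k.factorial : ℚ)) ≠ 0 :=
      fun k => Nat.cast_ne_zero.mpr (Nat.factorial_ne_zero k)
    rcases Nat.lt_or_ge d a with h₁ | h₁ <;> rcases Nat.lt_or_ge d 2 with h₂ | h₂ <;>
      rcases Nat.eq_zero_or_pos i with h₃ | h₃
    · -- d < a, d = 1, i = 0
      rw [if_pos h₁, if_neg (show ¬ 2 ≤ d by omega), if_pos h₃,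
        if_neg (show ¬ 1 ≤ i by omega)]
      obtain rfl : d = 1 := by omega
      subst h₃
      obtain ⟨t, rfl⟩ : ∃ t, a = t + 2 := ⟨a - 2, by omega⟩
      obtain rfl : N = t + 2 := by omega
      push_cast
      have key1 := IH (t + 2) (by omega) (t + 1) 1 0 (by omega) (by omega) (by omega)
      simp only [List.replicate_zero] at key1
      rw [key1]
      push_cast
      rw [show (t + 2 + 1).factorial = (t + 3) * (t + 2).factorial from by
          rw [show t + 2 + 1 = (t + 2) + 1 from rfl, Nat.factorial_succ],
        show (t + 2).factorial = (t + 2) * (t + 1).factorial from Nat.factorial_succ _,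
        Nat.factorial_zero]
      have n1 := hfv (t + 1)
      push_cast
      field_simp
      ring
    · -- d < a, d = 1, i ≥ 1
      rw [if_pos h₁, if_neg (show ¬ 2 ≤ d by omega), if_neg (show ¬ i = 0 by omega),
        if_pos (show 1 ≤ i from h₃)]
      obtain rfl : d = 1 := by omega
      obtain ⟨t, rfl⟩ : ∃ t, a = t + 2 := ⟨a - 2, by omega⟩
      obtain ⟨j, rfl⟩ : ∃ j, i = j + 1 := ⟨i - 1, by omega⟩
      obtain rfl : N = t + j + 3 := by omega
      push_cast
      rw [IH (t + j + 3) (by omega) (t + 1) 1 (j + 1) (by omega) (by omega) (by omega),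
        IH (t + j + 3) (by omega) (t + 2) 1 j (by omega) (by omega) (by omega)]
      push_cast
      rw [show (t + 2).factorial = (t + 2) * (t + 1).factorial from Nat.factorial_succ _,
        show (j + 1).factorial = (j + 1) * j.factorial from Nat.factorial_succ _,
        show (t + j + 3 + 1).factorial = (t + j + 4) * (t + j + 3).factorial from by
          rw [show t + j + 3 + 1 = (t + j + 3) + 1 from rfl, Nat.factorial_succ],
        Nat.factorial_zero]
      have n1 := hfv (t + 1)
      have n2 := hfv j
      have n3 := hfv (t + j + 3)
      push_cast
      field_simp
      ring
    · -- d < a, d ≥ 2, i = 0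
      rw [if_pos h₁, if_pos h₂, if_neg (show ¬ 1 ≤ i by omega)]
      subst h₃
      obtain ⟨e, rfl⟩ : ∃ e, d = e + 2 := ⟨d - 2, by omega⟩
      obtain ⟨t, rfl⟩ : ∃ t, a = e + t + 3 := ⟨a - e - 3, by omega⟩
      obtain rfl : N = 2 * e + t + 4 := by omega
      push_cast
      rw [show e + t + 1 - e = t + 1 from by omega]
      have key1 := IH (2 * e + t + 4) (by omega) (e + t + 2) (e + 2) 0 (by omega)
        (by omega) (by omega)
      have key2 := IH (2 * e + t + 4) (by omega) (e + t + 3) (e + 1) 0 (by omega)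
        (by omega) (by omega)
      simp only [List.replicate_zero] at key1 key2
      rw [key1, key2]
      push_cast
      rw [show e + t - e = t from by omega, show e + t + 2 - e = t + 2 from by omega]
      rw [show (e + t + 3).factorial = (e + t + 3) * (e + t + 2).factorial from by
          rw [show e + t + 3 = (e + t + 2) + 1 from by omega, Nat.factorial_succ],
        show (e + 1).factorial = (e + 1) * e.factorial from Nat.factorial_succ _,
        show (2 * e + t + 4 + 1).factorial
            = (2 * e + t + 5) * (2 * e + t + 4).factorial from by
          rw [show 2 * e + t + 4 + 1 = (2 * e + t + 4) + 1 from rfl, Nat.factorial_succ],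
        Nat.factorial_zero]
      have n1 := hfv (e + t + 2)
      have n2 := hfv e
      have n3 := hfv (2 * e + t + 4)
      push_cast
      field_simp
      ring
    · -- d < a, d ≥ 2, i ≥ 1
      rw [if_pos h₁, if_pos h₂, if_pos (show 1 ≤ i from h₃)]
      obtain ⟨e, rfl⟩ : ∃ e, d = e + 2 := ⟨d - 2, by omega⟩
      obtain ⟨t, rfl⟩ : ∃ t, a = e + t + 3 := ⟨a - e - 3, by omega⟩
      obtain ⟨j, rfl⟩ : ∃ j, i = j + 1 := ⟨i - 1, by omega⟩
      obtain rfl : N = 2 * e + t + j + 5 := by omega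
      push_cast
      rw [show e + t + 1 - e = t + 1 from by omega]
      rw [IH (2 * e + t + j + 5) (by omega) (e + t + 2) (e + 2) (j + 1) (by omega)
          (by omega) (by omega),
        IH (2 * e + t + j + 5) (by omega) (e + t + 3) (e + 1) (j + 1) (by omega)
          (by omega) (by omega),
        IH (2 * e + t + j + 5) (by omega) (e + t + 3) (e + 2) j (by omega)
          (by omega) (by omega)]
      push_cast
      rw [show e + t - e = t from by omega, show e + t + 2 - e = t + 2 from by omega,
        show e + t + 1 - e = t + 1 from by omega]
      rw [show (e + t + 3).factorial = (e + t + 3) * (e + t + 2).factorial from by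
          rw [show e + t + 3 = (e + t + 2) + 1 from by omega, Nat.factorial_succ],
        show (e + 1).factorial = (e + 1) * e.factorial from Nat.factorial_succ e,
        show (j + 1).factorial = (j + 1) * j.factorial from Nat.factorial_succ j,
        show (2 * e + t + j + 5 + 1).factorial
            = (2 * e + t + j + 6) * (2 * e + t + j + 5).factorial from by
          rw [show 2 * e + t + j + 5 + 1 = (2 * e + t + j + 5) + 1 from rfl,
            Nat.factorial_succ]]
      have n1 := hfv (e + t + 2)
      have n2 := hfv e
      have n3 := hfv j
      have n4 := hfv (2 * e + t + j + 5)
      push_cast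
      field_simp
      ring
    · -- a = d, d = 1, i = 0
      rw [if_neg (show ¬ d < a by omega), if_neg (show ¬ 2 ≤ d by omega), if_pos h₃,
        if_neg (show ¬ 1 ≤ i by omega)]
      obtain rfl : d = 1 := by omega
      obtain rfl : a = 1 := by omega
      subst h₃
      obtain rfl : N = 1 := by omega
      norm_num [Nat.factorial]
    · -- a = d, d = 1, i ≥ 1
      rw [if_neg (show ¬ d < a by omega), if_neg (show ¬ 2 ≤ d by omega),
        if_neg (show ¬ i = 0 by omega), if_pos (show 1 ≤ i from h₃)]
      obtain rfl : d = 1 := by omega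
      obtain rfl : a = 1 := by omega
      obtain ⟨j, rfl⟩ : ∃ j, i = j + 1 := ⟨i - 1, by omega⟩
      obtain rfl : N = j + 2 := by omega
      push_cast
      rw [IH (j + 2) (by omega) 1 1 j (by omega) (by omega) (by omega)]
      push_cast
      rw [show (j + 2 + 1).factorial = (j + 3) * (j + 2).factorial from by
          rw [show j + 2 + 1 = (j + 2) + 1 from rfl, Nat.factorial_succ],
        show (j + 2).factorial = (j + 2) * ((j + 1) * j.factorial) from by
          rw [show j + 2 = (j + 1) + 1 from rfl, Nat.factorial_succ, Nat.factorial_succ],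
        show (j + 1).factorial = (j + 1) * j.factorial from Nat.factorial_succ _,
        Nat.factorial_zero, Nat.factorial_one]
      have n1 := hfv j
      have n2 := hfv (j + 2)
      push_cast
      field_simp
      ring
    · -- a = d, d ≥ 2, i = 0
      rw [if_neg (show ¬ d < a by omega), if_pos h₂, if_neg (show ¬ 1 ≤ i by omega)]
      subst h₃
      obtain ⟨e, rfl⟩ : ∃ e, d = e + 2 := ⟨d - 2, by omega⟩
      obtain rfl : a = e + 2 := by omega
      obtain rfl : N = 2 * e + 3 := by omega
      push_cast
      have key1 := IH (2 * e + 3) (by omega) (e + 2) (e + 1) 0 (by omega) (by omega)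
        (by omega)
      simp only [List.replicate_zero] at key1
      rw [key1]
      push_cast
      try rw [show e - e = 0 from by omega]
      try rw [show e + 2 - e = 2 from by omega]
      try rw [show e + 1 - e = 1 from by omega]
      rw [show (e + 2).factorial = (e + 2) * ((e + 1) * e.factorial) from by
          rw [show e + 2 = (e + 1) + 1 from rfl, Nat.factorial_succ, Nat.factorial_succ],
        show (e + 1).factorial = (e + 1) * e.factorial from Nat.factorial_succ _,
        show (2 * e + 3 + 1).factorial = (2 * e + 4) * (2 * e + 3).factorial from by
          rw [show 2 * e + 3 + 1 = (2 * e + 3) + 1 from rfl, Nat.factorial_succ],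
        Nat.factorial_zero]
      have n1 := hfv e
      have n2 := hfv (2 * e + 3)
      push_cast
      field_simp
      ring
    · -- a = d, d ≥ 2, i ≥ 1
      rw [if_neg (show ¬ d < a by omega), if_pos h₂, if_pos (show 1 ≤ i from h₃)]
      obtain ⟨e, rfl⟩ : ∃ e, d = e + 2 := ⟨d - 2, by omega⟩
      obtain rfl : a = e + 2 := by omega
      obtain ⟨j, rfl⟩ : ∃ j, i = j + 1 := ⟨i - 1, by omega⟩
      obtain rfl : N = 2 * e + j + 4 := by omega
      push_cast
      rw [IH (2 * e + j + 4) (by omega) (e + 2) (e + 1) (j + 1) (by omega) (by omega)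
          (by omega),
        IH (2 * e + j + 4) (by omega) (e + 2) (e + 2) j (by omega) (by omega) (by omega)]
      push_cast
      try rw [show e - e = 0 from by omega]
      try rw [show e + 2 - e = 2 from by omega]
      try rw [show e + 1 - e = 1 from by omega]
      rw [show (e + 2).factorial = (e + 2) * ((e + 1) * e.factorial) from by
          rw [show e + 2 = (e + 1) + 1 from rfl, Nat.factorial_succ, Nat.factorial_succ],
        show (e + 1).factorial = (e + 1) * e.factorial from Nat.factorial_succ _,
        show (j + 1).factorial = (j + 1) * j.factorial from Nat.factorial_succ _,
        show (2 * e + j + 4 + 1).factorial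
            = (2 * e + j + 5) * (2 * e + j + 4).factorial from by
          rw [show 2 * e + j + 4 + 1 = (2 * e + j + 4) + 1 from rfl, Nat.factorial_succ]]
      have n1 := hfv e
      have n2 := hfv j
      have n3 := hfv (2 * e + j + 4)
      push_cast
      field_simp
      ring

/-- For integers `n, d, i` with `d ≥ 1` and `0 ≤ i ≤ n − 2d`, the number of standard
Young tableaux of shape `(n−d−i, d, 1^i)` equals
`n!·(n−2d−i+1) / ((n−d−i)!·(d−1)!·i!·(n−d+1)·(d+i))`. -/
theorem sytCount_hook_with_two_rows (n d i : ℕ) (hd : 1 ≤ d) (hi : 2 * d + i ≤ n) :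
    (sytCount n ((n - d - i) :: d :: List.replicate i 1) : ℚ)
      = (n.factorial : ℚ) * ((n : ℚ) - 2 * d - i + 1) /
          (((n - d - i).factorial : ℚ) * ((d - 1).factorial : ℚ) * (i.factorial : ℚ) *
            ((n - d + 1 : ℕ) : ℚ) * ((d + i : ℕ) : ℚ)) := by
  rw [key n (n - d - i) d i hd (by omega) (by omega)]
  have e1 : ((n - d - i - d + 1 : ℕ) : ℚ) = (n : ℚ) - 2 * d - i + 1 := by
    rw [show n - d - i - d + 1 = n - (2 * d + i) + 1 from by omega]
    push_cast [Nat.cast_sub hi]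
    ring
  have e2 : n - d - i + i + 1 = n - d + 1 := by omega
  rw [e2, e1]
end
end

section
/- For all integers n, d, i with d ≥ 2 and n−2d+2 ≤ i ≤ n−d, the number of standard Young tableaux of shape (d−1, n−d−i+1, 1^i) equals n! · (2d−n+i−1) / ((n−d−i)! · (d−1)! · i! · (n−d+1) · (d+i)). -/
noncomputable section

namespace SYTaux

/-- number of occurrences of letter `s` among the first `j` positions of `w`. -/
def cnt {n : ℕ} (w : Fin n → Fin 3) (s : Fin 3) (j : ℕ) : ℕ :=
  (Finset.univ.filter fun t : Fin n => (t : ℕ) < j ∧ w t = s).card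

def ok {n : ℕ} (w : Fin n → Fin 3) : Prop :=
  (∀ j, cnt w 1 j ≤ cnt w 0 j) ∧ (∀ j, 1 ≤ cnt w 2 j → 1 ≤ cnt w 1 j)

def WT (n a b k : ℕ) :=
  {w : Fin n → Fin 3 // cnt w 0 n = a ∧ cnt w 1 n = b ∧ cnt w 2 n = k ∧ ok w}

instance (n a b k : ℕ) : Finite (WT n a b k) := by unfold WT; infer_instance

def Pc (n a b k : ℕ) : ℕ := Nat.card (WT n a b k)

variable {n : ℕ}

lemma cnt_mono (w : Fin n → Fin 3) (s : Fin 3) {j j' : ℕ} (h : j ≤ j') :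
    cnt w s j ≤ cnt w s j' := by
  apply Finset.card_le_card
  intro t ht
  simp only [Finset.mem_filter] at *
  exact ⟨ht.1, ht.2.1.trans_le h, ht.2.2⟩

lemma cnt_succ (w : Fin n → Fin 3) (s : Fin 3) (t : Fin n) :
    cnt w s ((t : ℕ) + 1) = cnt w s t + (if w t = s then 1 else 0) := by
  classical
  unfold cnt
  split_ifs with h
  · rw [show (Finset.univ.filter fun u : Fin n => (u : ℕ) < (t : ℕ) + 1 ∧ w u = s)
        = insert t (Finset.univ.filter fun u : Fin n => (u : ℕ) < (t : ℕ) ∧ w u = s) from ?_]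
    · rw [Finset.card_insert_of_notMem]
      simp
    · ext u
      simp only [Finset.mem_insert, Finset.mem_filter, Finset.mem_univ, true_and]
      constructor
      · rintro ⟨hu, hw⟩
        rcases Nat.lt_succ_iff_lt_or_eq.mp hu with h' | h'
        · exact Or.inr ⟨h', hw⟩
        · exact Or.inl (Fin.ext h')
      · rintro (rfl | ⟨hu, hw⟩)
        · exact ⟨Nat.lt_succ_self _, h⟩
        · exact ⟨hu.trans (Nat.lt_succ_self _), hw⟩
  · simp only [Nat.add_zero]
    congr 1
    apply Finset.filter_congr
    intro u _
    constructor
    · rintro ⟨hu, hw⟩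
      refine ⟨?_, hw⟩
      rcases Nat.lt_succ_iff_lt_or_eq.mp hu with h' | h'
      · exact h'
      · exact absurd hw (by rw [Fin.ext h']; exact h)
    · rintro ⟨hu, hw⟩
      exact ⟨hu.trans (Nat.lt_succ_self _), hw⟩

lemma cnt_stab (w : Fin n → Fin 3) (s : Fin 3) {j : ℕ} (h : n ≤ j) :
    cnt w s j = cnt w s n := by
  unfold cnt
  congr 1
  apply Finset.filter_congr
  intro u _
  have : (u : ℕ) < n := u.isLt
  simp only [this.trans_le h, this, true_and]

lemma cnt_lt_total (w : Fin n → Fin 3) {s : Fin 3} {t : Fin n} (h : w t = s) :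
    cnt w s t < cnt w s n := by
  have h1 : cnt w s ((t : ℕ) + 1) = cnt w s t + 1 := by rw [cnt_succ, if_pos h]
  have h2 : cnt w s ((t : ℕ) + 1) ≤ cnt w s n := cnt_mono w s t.isLt
  omega

lemma cnt_inj (w : Fin n → Fin 3) {s : Fin 3} {t t' : Fin n}
    (h : w t = s) (h' : w t' = s) (hc : cnt w s t = cnt w s t') : t = t' := by
  by_contra hne
  rcases Ne.lt_or_gt (fun h : (t:ℕ) = (t':ℕ) => hne (Fin.ext h)) with hlt | hlt
  · have h1 : cnt w s ((t : ℕ) + 1) = cnt w s t + 1 := by rw [cnt_succ, if_pos h]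
    have h2 : cnt w s ((t : ℕ) + 1) ≤ cnt w s t' := cnt_mono w s hlt
    omega
  · have h1 : cnt w s ((t' : ℕ) + 1) = cnt w s t' + 1 := by rw [cnt_succ, if_pos h']
    have h2 : cnt w s ((t' : ℕ) + 1) ≤ cnt w s t := cnt_mono w s hlt
    omega

/-- existence of the `c`-th occurrence. -/
lemma cnt_exists (w : Fin n → Fin 3) (s : Fin 3) {c : ℕ} (hc : c < cnt w s n) :
    ∃ t : Fin n, w t = s ∧ cnt w s t = c := by
  classical
  set S : Finset (Fin n) := Finset.univ.filter (fun t => w t = s) with hS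
  have hcardS : S.card = cnt w s n := by
    unfold cnt
    congr 1
    apply Finset.filter_congr
    intro u _
    simp [u.isLt]
  have himg : S.image (fun t : Fin n => cnt w s (t : ℕ)) = Finset.range (cnt w s n) := by
    apply Finset.eq_of_subset_of_card_le
    · intro x hx
      simp only [Finset.mem_image] at hx
      obtain ⟨t, ht, rfl⟩ := hx
      simp only [hS, Finset.mem_filter] at ht
      exact Finset.mem_range.mpr (cnt_lt_total w ht.2)
    · rw [Finset.card_range, ← hcardS]
      apply le_of_eq
      symm
      apply Finset.card_image_of_injOn
      intro t ht t' ht' hc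
      simp only [Finset.mem_coe, hS, Finset.mem_filter, Finset.mem_univ, true_and] at ht ht'
      exact cnt_inj w ht ht' hc
  have : c ∈ S.image (fun t : Fin n => cnt w s (t : ℕ)) := by rw [himg]; exact Finset.mem_range.mpr hc
  simp only [Finset.mem_image, hS, Finset.mem_filter, Finset.mem_univ, true_and] at this
  obtain ⟨t, ht, hct⟩ := this
  exact ⟨t, ht, hct⟩


lemma cnt_le_total (w : Fin n → Fin 3) (s : Fin 3) (j : ℕ) : cnt w s j ≤ cnt w s n := by
  rcases le_or_gt j n with h | h
  · exact cnt_mono w s h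
  · rw [cnt_stab w s h.le]

lemma all_eq_of_cnt_eq (w : Fin n → Fin 3) {s : Fin 3} (h : cnt w s n = n) (t : Fin n) :
    w t = s := by
  classical
  have h2 : (Finset.univ.filter fun t : Fin n => (t : ℕ) < n ∧ w t = s) = Finset.univ := by
    apply Finset.eq_univ_of_card
    rw [Fintype.card_fin]
    exact h
  have := Finset.mem_univ t
  rw [← h2, Finset.mem_filter] at this
  exact this.2.2

lemma cnt_init (w : Fin (n+1) → Fin 3) (s : Fin 3) {j : ℕ} (hj : j ≤ n) :
    cnt (fun t : Fin n => w t.castSucc) s j = cnt w s j := by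
  classical
  apply Finset.card_nbij (fun t : Fin n => t.castSucc)
  · intro t ht
    simp only [Finset.mem_coe, Finset.mem_filter, Finset.mem_univ, true_and] at *
    exact ht
  · intro t _ t' _ h
    exact Fin.castSucc_injective n h
  · intro t ht
    simp only [Finset.coe_filter, Set.mem_setOf_eq, Finset.mem_univ, true_and] at ht
    have htn : (t : ℕ) < n := lt_of_lt_of_le ht.1 hj
    have hcast : (Fin.castSucc (⟨(t : ℕ), htn⟩ : Fin n)) = t := by ext; simp
    refine ⟨⟨(t : ℕ), htn⟩, ?_, ?_⟩
    · simp only [Finset.mem_coe, Finset.mem_filter, Finset.mem_univ, true_and]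
      rw [hcast]
      exact ht
    · simp only []
      exact hcast

lemma cnt_last (w : Fin (n+1) → Fin 3) (s : Fin 3) :
    cnt w s (n+1) = cnt w s n + (if w (Fin.last n) = s then 1 else 0) := by
  have := cnt_succ w s (Fin.last n)
  simpa using this

/-- the generic fiber lemma for the last-letter decomposition. -/
lemma card_fiber (n a b k a' b' k' : ℕ) (s₀ : Fin 3)
    (h0 : a = a' + (if s₀ = 0 then 1 else 0))
    (h1 : b = b' + (if s₀ = 1 then 1 else 0))
    (h2 : k = k' + (if s₀ = 2 then 1 else 0))
    (hc1 : s₀ = 1 → b' + 1 ≤ a') (hc2 : s₀ = 2 → 1 ≤ b') :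
    Nat.card {w : WT (n+1) a b k // w.1 (Fin.last n) = s₀} = Pc n a' b' k' := by
  classical
  apply Nat.card_eq_of_bijective
    (fun w => (⟨fun t : Fin n => w.1.1 t.castSucc, ?_, ?_, ?_, ?_⟩ : WT n a' b' k'))
  rotate_left
  -- count 0
  · have := cnt_last w.1.1 0
    rw [w.2] at this
    rw [cnt_init w.1.1 0 le_rfl]
    have hc := w.1.2.1
    rw [this] at hc
    by_cases hs : s₀ = (0 : Fin 3) <;> simp [hs] at hc h0 ⊢ <;> omega
  -- count 1
  · have := cnt_last w.1.1 1
    rw [w.2] at this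
    rw [cnt_init w.1.1 1 le_rfl]
    have hc := w.1.2.2.1
    rw [this] at hc
    by_cases hs : s₀ = (1 : Fin 3) <;> simp [hs] at hc h1 ⊢ <;> omega
  -- count 2
  · have := cnt_last w.1.1 2
    rw [w.2] at this
    rw [cnt_init w.1.1 2 le_rfl]
    have hc := w.1.2.2.2.1
    rw [this] at hc
    by_cases hs : s₀ = (2 : Fin 3) <;> simp [hs] at hc h2 ⊢ <;> omega
  -- ok
  · constructor
    · intro j
      rcases le_or_gt j n with hj | hj
      · rw [cnt_init w.1.1 1 hj, cnt_init w.1.1 0 hj]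
        exact w.1.2.2.2.2.1 j
      · rw [cnt_stab _ _ hj.le, cnt_stab _ _ hj.le,
          cnt_init w.1.1 1 le_rfl, cnt_init w.1.1 0 le_rfl]
        exact w.1.2.2.2.2.1 n
    · intro j
      rcases le_or_gt j n with hj | hj
      · rw [cnt_init w.1.1 2 hj, cnt_init w.1.1 1 hj]
        exact w.1.2.2.2.2.2 j
      · rw [cnt_stab _ _ hj.le, cnt_stab _ _ hj.le,
          cnt_init w.1.1 2 le_rfl, cnt_init w.1.1 1 le_rfl]
        exact w.1.2.2.2.2.2 n
  constructor
  -- injective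
  · intro w w' h
    have h' : (fun t : Fin n => w.1.1 t.castSucc) = fun t : Fin n => w'.1.1 t.castSucc :=
      congrArg Subtype.val h
    apply Subtype.ext; apply Subtype.ext
    have e1 : w.1.1 = Fin.snoc (Fin.init w.1.1) (w.1.1 (Fin.last n)) :=
      (Fin.snoc_init_self w.1.1).symm
    have e2 : w'.1.1 = Fin.snoc (Fin.init w'.1.1) (w'.1.1 (Fin.last n)) :=
      (Fin.snoc_init_self w'.1.1).symm
    have hinit : Fin.init (w.1.1) = Fin.init (w'.1.1) := by
      funext t
      exact congrFun h' t
    rw [e1, e2, w.2, w'.2, hinit]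
  -- surjective
  · intro v
    have key : ∀ s j, j ≤ n → cnt (Fin.snoc v.1 s₀ : Fin (n+1) → Fin 3) s j = cnt v.1 s j := by
      intro s j hj
      rw [← cnt_init (Fin.snoc v.1 s₀) s hj]
      congr 1
      funext t
      simp [Fin.snoc_castSucc]
    have keyl : ∀ s, cnt (Fin.snoc v.1 s₀ : Fin (n+1) → Fin 3) s (n+1)
        = cnt v.1 s n + (if s₀ = s then 1 else 0) := by
      intro s
      rw [cnt_last, key s n le_rfl, Fin.snoc_last]
    have hok := v.2.2.2.2
    refine ⟨⟨⟨Fin.snoc v.1 s₀, ?_, ?_, ?_, ?_, ?_⟩, ?_⟩, ?_⟩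
    · rw [keyl 0, v.2.1, h0]
    · rw [keyl 1, v.2.2.1, h1]
    · rw [keyl 2, v.2.2.2.1, h2]
    · intro j
      rcases le_or_gt j n with hj | hj
      · rw [key 1 j hj, key 0 j hj]; exact hok.1 j
      · rw [cnt_stab (Fin.snoc v.1 s₀) 1 hj, cnt_stab (Fin.snoc v.1 s₀) 0 hj, keyl 1, keyl 0]
        have h1' := hok.1 n
        have hb' : cnt v.1 1 n = b' := v.2.2.1
        have ha' : cnt v.1 0 n = a' := v.2.1
        fin_cases s₀ <;> simp_all <;> omega
    · intro j
      rcases le_or_gt j n with hj | hj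
      · rw [key 2 j hj, key 1 j hj]; exact hok.2 j
      · rw [cnt_stab (Fin.snoc v.1 s₀) 2 hj, cnt_stab (Fin.snoc v.1 s₀) 1 hj, keyl 2, keyl 1]
        have h2' := hok.2 n
        have hb' : cnt v.1 1 n = b' := v.2.2.1
        have hk' : cnt v.1 2 n = k' := v.2.2.2.1
        fin_cases s₀ <;> simp_all <;> omega
    · show (Fin.snoc v.1 s₀ : Fin (n+1) → Fin 3) (Fin.last n) = s₀
      exact Fin.snoc_last _ _
    · apply Subtype.ext
      show (fun t : Fin n => (Fin.snoc v.1 s₀ : Fin (n+1) → Fin 3) t.castSucc) = v.1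
      funext t
      simp [Fin.snoc_castSucc]


lemma Pc_split (n a b k : ℕ) :
    Pc (n+1) a b k
      = Nat.card {w : WT (n+1) a b k // w.1 (Fin.last n) = 0}
      + Nat.card {w : WT (n+1) a b k // w.1 (Fin.last n) = 1}
      + Nat.card {w : WT (n+1) a b k // w.1 (Fin.last n) = 2} := by
  classical
  have e := Equiv.sigmaFiberEquiv (fun w : WT (n+1) a b k => w.1 (Fin.last n))
  rw [Pc, ← Nat.card_congr e]
  letI : ∀ s : Fin 3, Fintype {w : WT (n+1) a b k // w.1 (Fin.last n) = s} :=
    fun s => Fintype.ofFinite _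
  letI : Fintype ((s : Fin 3) × {w : WT (n+1) a b k // w.1 (Fin.last n) = s}) :=
    Sigma.instFintype
  rw [Nat.card_eq_fintype_card, Fintype.card_sigma]
  rw [show (Finset.univ : Finset (Fin 3)) = {0, 1, 2} from rfl]
  rw [Finset.sum_insert (by decide), Finset.sum_insert (by decide), Finset.sum_singleton]
  simp only [Nat.card_eq_fintype_card]
  ring

lemma Pc_zero_of_lt {n a b k : ℕ} (h : a < b) : Pc n a b k = 0 := by
  rw [Pc, Nat.card_eq_zero]
  left
  constructor
  intro w
  have := w.2.2.2.2.1 n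
  rw [w.2.1, w.2.2.1] at this
  omega

lemma Pc_zero_b0 {n a k : ℕ} (hk : 1 ≤ k) : Pc n a 0 k = 0 := by
  rw [Pc, Nat.card_eq_zero]
  left
  constructor
  intro w
  have := w.2.2.2.2.2 n
  rw [w.2.2.1, w.2.2.2.1] at this
  omega

lemma Pc_base (a : ℕ) : Pc a a 0 0 = 1 := by
  rw [Pc, Nat.card_eq_one_iff_unique]
  constructor
  · constructor
    intro w w'
    apply Subtype.ext
    funext t
    rw [all_eq_of_cnt_eq w.1 w.2.1 t, all_eq_of_cnt_eq w'.1 w'.2.1 t]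
  · refine ⟨⟨fun _ => 0, ?_, ?_, ?_, ?_, ?_⟩⟩
    · unfold cnt
      rw [show (Finset.univ.filter fun t : Fin a => (t : ℕ) < a ∧ (0 : Fin 3) = 0)
          = Finset.univ from by simp [Fin.isLt]]
      simp
    · unfold cnt
      rw [Finset.card_eq_zero.mpr (by simp)]
    · unfold cnt
      rw [Finset.card_eq_zero.mpr (by simp)]
    · intro j
      unfold cnt
      rw [Finset.card_eq_zero.mpr (by simp)]
      omega
    · intro j
      unfold cnt
      rw [Finset.card_eq_zero.mpr (by simp)]
      omega

lemma Pc_step {n a b k : ℕ} (hb : 1 ≤ b) (hba : b ≤ a) :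
    Pc (n+1) a b k = Pc n (a-1) b k + Pc n a (b-1) k
      + (if k = 0 then 0 else Pc n a b (k-1)) := by
  rw [Pc_split]
  congr 1
  congr 1
  · apply card_fiber n a b k (a-1) b k 0 <;> simp <;> omega
  · apply card_fiber n a b k a (b-1) k 1 <;> simp <;> omega
  · rcases Nat.eq_zero_or_pos k with hk | hk
    · rw [if_pos hk]
      rw [Nat.card_eq_zero]
      left
      constructor
      intro w
      have h1 : cnt w.1.1 2 (n+1) = cnt w.1.1 2 n + 1 := by
        rw [cnt_last, if_pos w.2]
      have h2 := w.1.2.2.2.1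
      omega
    · rw [if_neg (by omega)]
      apply card_fiber n a b k a b (k-1) 2 <;> simp <;> omega


/-- the closed hook-length-formula value. -/
def F (a b k : ℕ) : ℚ :=
  ((a+b+k).factorial : ℚ) * ((a:ℚ) - (b:ℚ) + 1) /
    (((a:ℚ)+(k:ℚ)+1) * ((b:ℚ)+(k:ℚ)) * (a.factorial : ℚ) * ((b-1).factorial : ℚ)
      * (k.factorial : ℚ))

lemma fact_ne (m : ℕ) : (m.factorial : ℚ) ≠ 0 :=
  Nat.cast_ne_zero.mpr (Nat.factorial_ne_zero m)

lemma algA (a b k : ℕ) :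
    F (a+1) (b+2) (k+1) = F a (b+2) (k+1) + F (a+1) (b+1) (k+1) + F (a+1) (b+2) k := by
  unfold F
  simp only [show a+1+(b+2)+(k+1) = (a+(b+2)+(k+1))+1 from by ring,
    show (a+1)+(b+1)+(k+1) = a+(b+2)+(k+1) from by ring,
    show (a+1)+(b+2)+k = a+(b+2)+(k+1) from by ring,
    show b+2-1 = b+1 from rfl, show b+1-1 = b from rfl,
    Nat.factorial_succ (a+(b+2)+(k+1)), Nat.factorial_succ a,
    Nat.factorial_succ b, Nat.factorial_succ k]
  have h1 : ((a+(b+2)+(k+1)).factorial : ℚ) ≠ 0 := fact_ne _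
  have h2 : (a.factorial : ℚ) ≠ 0 := fact_ne _
  have h3 : (b.factorial : ℚ) ≠ 0 := fact_ne _
  have h4 : (k.factorial : ℚ) ≠ 0 := fact_ne _
  push_cast
  have n1 : (a:ℚ)+1 ≠ 0 := by positivity
  have n2 : (b:ℚ)+1 ≠ 0 := by positivity
  have n3 : (k:ℚ)+1 ≠ 0 := by positivity
  have n4 : (a:ℚ)+(k:ℚ)+1 ≠ 0 := by positivity
  have n5 : (a:ℚ)+(k:ℚ)+2 ≠ 0 := by positivity
  have n6 : (a:ℚ)+(k:ℚ)+3 ≠ 0 := by positivity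
  have n7 : (b:ℚ)+(k:ℚ)+1 ≠ 0 := by positivity
  have n8 : (b:ℚ)+(k:ℚ)+2 ≠ 0 := by positivity
  have n9 : (b:ℚ)+(k:ℚ)+3 ≠ 0 := by positivity
  field_simp
  ring

lemma algB (a b : ℕ) :
    F (a+1) (b+2) 0 = F a (b+2) 0 + F (a+1) (b+1) 0 := by
  unfold F
  simp only [show a+1+(b+2)+0 = (a+(b+2)+0)+1 from by ring,
    show (a+1)+(b+1)+0 = a+(b+2)+0 from by ring,
    show b+2-1 = b+1 from rfl, show b+1-1 = b from rfl,
    Nat.factorial_succ (a+(b+2)+0), Nat.factorial_succ a,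
    Nat.factorial_succ b]
  have h1 : ((a+(b+2)+0).factorial : ℚ) ≠ 0 := fact_ne _
  have h2 : (a.factorial : ℚ) ≠ 0 := fact_ne _
  have h3 : (b.factorial : ℚ) ≠ 0 := fact_ne _
  push_cast
  have n1 : (a:ℚ)+1 ≠ 0 := by positivity
  have n2 : (b:ℚ)+1 ≠ 0 := by positivity
  have n4 : (a:ℚ)+1 ≠ 0 := by positivity
  have n5 : (a:ℚ)+2 ≠ 0 := by positivity
  have n7 : (b:ℚ)+1 ≠ 0 := by positivity
  have n8 : (b:ℚ)+2 ≠ 0 := by positivity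
  field_simp
  ring

lemma algC (a k : ℕ) :
    F (a+1) 1 (k+1) = F a 1 (k+1) + F (a+1) 1 k := by
  unfold F
  simp only [show a+1+1+(k+1) = (a+1+(k+1))+1 from by ring,
    show (a+1)+1+k = a+1+(k+1) from by ring,
    Nat.factorial_succ (a+1+(k+1)), Nat.factorial_succ a,
    Nat.factorial_succ k]
  have h1 : ((a+1+(k+1)).factorial : ℚ) ≠ 0 := fact_ne _
  have h2 : (a.factorial : ℚ) ≠ 0 := fact_ne _
  have h4 : (k.factorial : ℚ) ≠ 0 := fact_ne _
  push_cast
  have n1 : (a:ℚ)+1 ≠ 0 := by positivity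
  have n3 : (k:ℚ)+1 ≠ 0 := by positivity
  have n4 : (a:ℚ)+(k:ℚ)+1 ≠ 0 := by positivity
  have n5 : (a:ℚ)+(k:ℚ)+2 ≠ 0 := by positivity
  have n6 : (a:ℚ)+(k:ℚ)+3 ≠ 0 := by positivity
  have n7 : (k:ℚ)+2 ≠ 0 := by positivity
  field_simp
  ring

lemma algD (a : ℕ) : F (a+1) 1 0 = F a 1 0 + 1 := by
  unfold F
  simp only [show a+1+1+0 = (a+1+0)+1 from by ring,
    Nat.factorial_succ (a+1+0), Nat.factorial_succ a]
  have h1 : ((a+1+0).factorial : ℚ) ≠ 0 := fact_ne _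
  have h2 : (a.factorial : ℚ) ≠ 0 := fact_ne _
  push_cast
  have n1 : (a:ℚ)+1 ≠ 0 := by positivity
  have n5 : (a:ℚ)+2 ≠ 0 := by positivity
  field_simp
  all_goals ring

lemma F_zero_of_eq {a b k : ℕ} (h : a + 1 = b) : F a b k = 0 := by
  unfold F
  have : (a:ℚ) - (b:ℚ) + 1 = 0 := by
    have : (b:ℚ) = (a:ℚ) + 1 := by exact_mod_cast congrArg (Nat.cast : ℕ → ℚ) h.symm
    rw [this]; ring
  rw [this]
  simp

/-- The main count: `Pc` is given by the closed formula. -/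
lemma Pc_eq_F : ∀ N a b k : ℕ, a + b + k = N → 1 ≤ b → b ≤ a →
    (Pc (a+b+k) a b k : ℚ) = F a b k := by
  intro N
  induction N using Nat.strong_induction_on with
  | _ N ih =>
  intro a b k hN hb hba
  obtain ⟨n, hn⟩ : ∃ n, a + b + k = n + 1 := ⟨a+b+k-1, by omega⟩
  rw [hn, Pc_step hb hba]
  have T1 : (Pc n (a-1) b k : ℚ) = F (a-1) b k := by
    rcases eq_or_lt_of_le hba with heq | hlt
    · rw [Pc_zero_of_lt (show a-1 < b by omega)]
      rw [F_zero_of_eq (show (a-1)+1 = b by omega)]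
      simp
    · have hsum : (a-1) + b + k = n := by omega
      rw [← hsum]
      exact ih n (by omega) (a-1) b k hsum hb (by omega)
  have T2 : (Pc n a (b-1) k : ℚ) = if b = 1 then (if k = 0 then 1 else 0) else F a (b-1) k := by
    rcases eq_or_lt_of_le hb with heq | hlt
    · rw [if_pos heq.symm, ← heq]
      simp only [Nat.sub_self]
      rcases Nat.eq_zero_or_pos k with hk | hk
      · subst hk
        rw [if_pos rfl]
        have hna : n = a := by omega
        subst hna
        rw [Pc_base]
        norm_num
      · rw [if_neg (by omega), Pc_zero_b0 hk]
        norm_num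
    · rw [if_neg (by omega)]
      have hsum : a + (b-1) + k = n := by omega
      rw [← hsum]
      exact ih n (by omega) a (b-1) k hsum (by omega) (by omega)
  have T3 : k ≠ 0 → (Pc n a b (k-1) : ℚ) = F a b (k-1) := by
    intro hk
    have hsum : a + b + (k-1) = n := by omega
    rw [← hsum]
    exact ih n (by omega) a b (k-1) hsum hb hba
  push_cast [T1]
  rcases Nat.eq_zero_or_pos k with hk0 | hk0
  · subst hk0
    simp only [if_pos rfl]
    rcases eq_or_lt_of_le hb with heq | hlt
    · -- b = 1, k = 0
      rw [T2]
      rw [if_pos heq.symm, if_pos rfl]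
      obtain ⟨a', rfl⟩ : ∃ a', a = a' + 1 := ⟨a-1, by omega⟩
      rw [← heq]
      simp only [Nat.add_sub_cancel]
      rw [algD a']
      push_cast
      ring
    · -- b ≥ 2, k = 0
      rw [T2, if_neg (by omega)]
      obtain ⟨a', rfl⟩ : ∃ a', a = a' + 1 := ⟨a-1, by omega⟩
      obtain ⟨b', rfl⟩ : ∃ b', b = b' + 2 := ⟨b-2, by omega⟩
      simp only [Nat.add_sub_cancel]
      rw [algB a' b']
      push_cast
      ring
  · rw [if_neg (by omega), T3 (by omega)]
    rcases eq_or_lt_of_le hb with heq | hlt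
    · -- b = 1, k ≥ 1
      rw [T2, if_pos heq.symm, if_neg (by omega), ← heq]
      obtain ⟨a', rfl⟩ : ∃ a', a = a' + 1 := ⟨a-1, by omega⟩
      obtain ⟨k', rfl⟩ : ∃ k', k = k' + 1 := ⟨k-1, by omega⟩
      simp only [Nat.add_sub_cancel]
      rw [algC a' k']
      push_cast
      ring
    · -- b ≥ 2, k ≥ 1
      rw [T2, if_neg (by omega)]
      obtain ⟨a', rfl⟩ : ∃ a', a = a' + 1 := ⟨a-1, by omega⟩
      obtain ⟨b', rfl⟩ : ∃ b', b = b' + 2 := ⟨b-2, by omega⟩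
      obtain ⟨k', rfl⟩ : ∃ k', k = k' + 1 := ⟨k-1, by omega⟩
      simp only [Nat.add_sub_cancel]
      rw [algA a' b' k']
      push_cast
      ring


/-! ### The tableau side -/

def strand (p : ℕ × ℕ) : Fin 3 := if p.1 = 0 then 0 else if p.1 = 1 then 1 else 2

def idx (p : ℕ × ℕ) : ℕ := if p.1 ≤ 1 then p.2 else p.1 - 2

def cellOf (s : Fin 3) (c : ℕ) : ℕ × ℕ :=
  if s = 0 then (0, c) else if s = 1 then (1, c) else (c+2, 0)

def scount (a b k : ℕ) (s : Fin 3) : ℕ := if s = 0 then a else if s = 1 then b else k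

def shape (a b k : ℕ) : List ℕ := a :: b :: List.replicate k 1

lemma mem_cells {a b k : ℕ} {p : ℕ × ℕ} :
    p ∈ youngCells (shape a b k) ↔
      (p.1 = 0 ∧ p.2 < a) ∨ (p.1 = 1 ∧ p.2 < b) ∨ (2 ≤ p.1 ∧ p.1 < k + 2 ∧ p.2 = 0) := by
  classical
  unfold youngCells shape
  simp only [Finset.mem_biUnion, Finset.mem_range, Finset.mem_image, List.length_cons,
    List.length_replicate]
  constructor
  · rintro ⟨r, hr, c, hc, rfl⟩
    match r with
    | 0 => exact Or.inl ⟨rfl, by simpa using hc⟩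
    | 1 => exact Or.inr (Or.inl ⟨rfl, by simpa using hc⟩)
    | (m+2) =>
      refine Or.inr (Or.inr ⟨by omega, by omega, ?_⟩)
      have : (List.replicate k 1).getD m 0 = 1 := by
        rw [List.getD_eq_getElem?_getD, List.getElem?_replicate, if_pos (by omega)]
        rfl
      simp only [List.getD_cons_succ, List.getD_cons_succ] at hc
      rw [this] at hc
      omega
  · rintro (⟨h1, h2⟩ | ⟨h1, h2⟩ | ⟨h1, h2, h3⟩)
    · exact ⟨0, by omega, p.2, by simpa using h2, by rw [← h1]⟩
    · exact ⟨1, by omega, p.2, by simpa using h2, by rw [← h1]⟩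
    · refine ⟨p.1, by omega, p.2, ?_, rfl⟩
      obtain ⟨m, hm⟩ : ∃ m, p.1 = m + 2 := ⟨p.1 - 2, by omega⟩
      rw [hm]
      simp only [List.getD_cons_succ]
      have : (List.replicate k 1).getD m 0 = 1 := by
        rw [List.getD_eq_getElem?_getD, List.getElem?_replicate, if_pos (by omega)]
        rfl
      rw [this, h3]
      omega

lemma strand_cellOf (s : Fin 3) (c : ℕ) : strand (cellOf s c) = s := by
  fin_cases s <;> simp [strand, cellOf]

lemma idx_cellOf (s : Fin 3) (c : ℕ) : idx (cellOf s c) = c := by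
  fin_cases s <;> simp [idx, cellOf]

lemma cellOf_strand_idx {a b k : ℕ} {p : ℕ × ℕ} (hp : p ∈ youngCells (shape a b k)) :
    cellOf (strand p) (idx p) = p := by
  rw [mem_cells] at hp
  rcases hp with ⟨h1, _⟩ | ⟨h1, _⟩ | ⟨h1, _, h3⟩
  · simp [cellOf, strand, idx, h1, Prod.ext_iff]
  · simp [cellOf, strand, idx, h1, Prod.ext_iff]
  · have hs : strand p = 2 := by
      simp only [strand]
      rw [if_neg (by omega), if_neg (by omega)]
    have hi : idx p = p.1 - 2 := by
      simp only [idx]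
      rw [if_neg (by omega)]
    rw [hs, hi]
    simp only [cellOf]
    rw [if_neg (by decide), if_neg (by decide), Prod.ext_iff]
    refine ⟨?_, h3.symm⟩
    simp only []
    omega

lemma cellOf_mem {a b k : ℕ} {s : Fin 3} {c : ℕ} :
    cellOf s c ∈ youngCells (shape a b k) ↔ c < scount a b k s := by
  rw [mem_cells]
  fin_cases s <;> simp [cellOf, scount] <;> omega

lemma idx_lt_scount {a b k : ℕ} {p : ℕ × ℕ} (hp : p ∈ youngCells (shape a b k)) :
    idx p < scount a b k (strand p) := by
  rw [← cellOf_mem (a := a) (b := b) (k := k), cellOf_strand_idx hp]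
  exact hp

lemma cellOf_inj (s : Fin 3) : Function.Injective (cellOf s) := by
  intro c c' h
  have := congrArg idx h
  rwa [idx_cellOf, idx_cellOf] at this

/-- the tableau associated to a word. -/
def tab {n : ℕ} (hn : 0 < n) (w : Fin n → Fin 3) (a b k : ℕ) : ℕ × ℕ → Fin n :=
  fun p => if h : p ∈ youngCells (shape a b k) ∧
      ∃ t : Fin n, w t = strand p ∧ cnt w (strand p) (t : ℕ) = idx p
    then h.2.choose else ⟨0, hn⟩

section Forward

variable {a b k : ℕ} {n : ℕ} (hn : 0 < n) (w : Fin n → Fin 3)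
  (hw : cnt w 0 n = a ∧ cnt w 1 n = b ∧ cnt w 2 n = k ∧ ok w)
  (hnn : n = a + b + k)

include hw

lemma cnt_scount (s : Fin 3) : cnt w s n = scount a b k s := by
  fin_cases s <;> simp [scount, hw.1, hw.2.1, hw.2.2.1]

lemma tab_spec {p : ℕ × ℕ} (hp : p ∈ youngCells (shape a b k)) :
    w (tab hn w a b k p) = strand p ∧
      cnt w (strand p) ((tab hn w a b k p : Fin n) : ℕ) = idx p := by
  have hex : ∃ t : Fin n, w t = strand p ∧ cnt w (strand p) (t : ℕ) = idx p := by
    apply cnt_exists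
    rw [cnt_scount w hw]
    exact idx_lt_scount hp
  rw [tab, dif_pos ⟨hp, hex⟩]
  exact hex.choose_spec

lemma tab_notmem {p : ℕ × ℕ} (hp : p ∉ youngCells (shape a b k)) :
    tab hn w a b k p = ⟨0, hn⟩ := by
  rw [tab, dif_neg]
  tauto

lemma tab_surj (t : Fin n) :
    cellOf (w t) (cnt w (w t) (t : ℕ)) ∈ youngCells (shape a b k) ∧
      tab hn w a b k (cellOf (w t) (cnt w (w t) (t : ℕ))) = t := by
  have hmem : cellOf (w t) (cnt w (w t) (t : ℕ)) ∈ youngCells (shape a b k) := by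
    rw [cellOf_mem]
    rw [← cnt_scount (a := a) (b := b) (k := k) w hw]
    exact cnt_lt_total w rfl
  refine ⟨hmem, ?_⟩
  have hs := tab_spec hn w hw hmem
  rw [strand_cellOf, idx_cellOf] at hs
  exact cnt_inj w hs.1 rfl (by rw [hs.2])

lemma tab_inj {p q : ℕ × ℕ} (hp : p ∈ youngCells (shape a b k))
    (hq : q ∈ youngCells (shape a b k)) (h : tab hn w a b k p = tab hn w a b k q) : p = q := by
  have sp := tab_spec hn w hw hp
  have sq := tab_spec hn w hw hq
  rw [h] at sp
  have hst : strand p = strand q := by rw [← sp.1, ← sq.1]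
  have hidx : idx p = idx q := by
    rw [← sp.2, ← sq.2, hst]
  rw [← cellOf_strand_idx hp, ← cellOf_strand_idx hq, hst, hidx]

lemma tab_strand_mono {p q : ℕ × ℕ} (hp : p ∈ youngCells (shape a b k))
    (hq : q ∈ youngCells (shape a b k)) (hst : strand p = strand q) (hidx : idx p < idx q) :
    tab hn w a b k p < tab hn w a b k q := by
  have sp := tab_spec hn w hw hp
  have sq := tab_spec hn w hw hq
  rw [hst] at sp
  by_contra hle
  push_neg at hle
  have hmono : cnt w (strand q) ((tab hn w a b k q : Fin n) : ℕ)
      ≤ cnt w (strand q) ((tab hn w a b k p : Fin n) : ℕ) := cnt_mono w (strand q) hle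
  rw [sp.2, sq.2] at hmono
  omega

lemma tab_cross01 {c : ℕ} (hb : 1 ≤ b) (hba : b ≤ a) (hc : c < b) :
    tab hn w a b k (0, c) < tab hn w a b k (1, c) := by
  have hmem1 : ((1 : ℕ), c) ∈ youngCells (shape a b k) := mem_cells.mpr (Or.inr (Or.inl ⟨rfl, hc⟩))
  have hmem0 : ((0 : ℕ), c) ∈ youngCells (shape a b k) := mem_cells.mpr (Or.inl ⟨rfl, by omega⟩)
  have s1 := tab_spec hn w hw hmem1
  have s0 := tab_spec hn w hw hmem0
  have hst1 : strand ((1 : ℕ), c) = 1 := by simp [strand]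
  have hst0 : strand ((0 : ℕ), c) = 0 := by simp [strand]
  have hidx1 : idx ((1 : ℕ), c) = c := by simp [idx]
  have hidx0 : idx ((0 : ℕ), c) = c := by simp [idx]
  rw [hst1, hidx1] at s1
  rw [hst0, hidx0] at s0
  set t' := tab hn w a b k ((1 : ℕ), c) with ht'
  set u := tab hn w a b k ((0 : ℕ), c) with hu
  have step1 : cnt w 1 ((t' : ℕ) + 1) = c + 1 := by
    rw [cnt_succ, s1.1, if_pos rfl, s1.2]
  have hok1 := hw.2.2.2.1 ((t' : ℕ) + 1)
  by_contra hle
  push_neg at hle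
  have hne : (u : ℕ) ≠ (t' : ℕ) := by
    intro h
    rw [Fin.ext h] at s0
    rw [s0.1] at s1
    exact absurd s1.1 (by simp)
  have hle' : (t' : ℕ) ≤ (u : ℕ) := hle
  have := cnt_mono w 0 (show (t' : ℕ) + 1 ≤ (u : ℕ) by omega)
  rw [s0.2] at this
  omega

lemma tab_cross12 {r : ℕ} (hb : 1 ≤ b) (hr : 2 ≤ r) (hrk : r < k + 2) :
    tab hn w a b k (1, 0) < tab hn w a b k (r, 0) := by
  have hmem1 : ((1 : ℕ), (0:ℕ)) ∈ youngCells (shape a b k) :=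
    mem_cells.mpr (Or.inr (Or.inl ⟨rfl, hb⟩))
  have hmemr : (r, (0:ℕ)) ∈ youngCells (shape a b k) :=
    mem_cells.mpr (Or.inr (Or.inr ⟨hr, hrk, rfl⟩))
  have s1 := tab_spec hn w hw hmem1
  have sr := tab_spec hn w hw hmemr
  have hst1 : strand ((1 : ℕ), (0:ℕ)) = 1 := by simp [strand]
  have hstr : strand (r, (0:ℕ)) = 2 := by
    simp only [strand]
    rw [if_neg (by omega), if_neg (by omega)]
  have hidx1 : idx ((1 : ℕ), (0:ℕ)) = 0 := by simp [idx]
  rw [hst1, hidx1] at s1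
  rw [hstr] at sr
  set t' := tab hn w a b k (r, (0:ℕ)) with ht'
  set u := tab hn w a b k ((1 : ℕ), (0:ℕ)) with hu
  have step2 : 1 ≤ cnt w 2 ((t' : ℕ) + 1) := by
    rw [cnt_succ, sr.1, if_pos rfl]
    omega
  have hok2 := hw.2.2.2.2 ((t' : ℕ) + 1) step2
  by_contra hle
  push_neg at hle
  have hne : (u : ℕ) ≠ (t' : ℕ) := by
    intro h
    rw [Fin.ext h] at s1
    rw [s1.1] at sr
    exact absurd sr.1 (by simp)
  have hle' : (t' : ℕ) ≤ (u : ℕ) := hle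
  have := cnt_mono w 1 (show (t' : ℕ) + 1 ≤ (u : ℕ) by omega)
  rw [s1.2] at this
  omega

end Forward


section Forward2

variable {a b k : ℕ} {n : ℕ} (hn : 0 < n) (w : Fin n → Fin 3)
  (hw : cnt w 0 n = a ∧ cnt w 1 n = b ∧ cnt w 2 n = k ∧ ok w)

include hw

lemma tab_isTableau : IsTableau n (shape a b k) (tab hn w a b k) := by
  refine ⟨fun p _ => Set.mem_univ _, ?_, ?_⟩
  · intro p hp q hq h
    exact tab_inj hn w hw hp hq h
  · intro t _
    obtain ⟨hmem, heq⟩ := tab_surj hn w hw t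
    exact ⟨_, hmem, heq⟩

lemma tab_isStandard (hb : 1 ≤ b) (hba : b ≤ a) :
    IsStandard n (shape a b k) (tab hn w a b k) := by
  intro p hp q hq hrel
  have hp' := mem_cells.mp hp
  have hq' := mem_cells.mp hq
  rcases hrel with ⟨hrow, hlt⟩ | ⟨hcol, hlt⟩
  · -- same row
    rcases hp' with ⟨h1, h2⟩ | ⟨h1, h2⟩ | ⟨h1, h2, h3⟩
    · apply tab_strand_mono hn w hw hp hq
      · rcases hq' with ⟨g1, _⟩ | ⟨g1, _⟩ | ⟨g1, _, _⟩ <;> simp [strand, h1, g1] <;> omega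
      · rcases hq' with ⟨g1, _⟩ | ⟨g1, _⟩ | ⟨g1, _, _⟩ <;> simp [idx, h1, g1] <;> omega
    · apply tab_strand_mono hn w hw hp hq
      · rcases hq' with ⟨g1, _⟩ | ⟨g1, _⟩ | ⟨g1, _, _⟩ <;> simp [strand, h1, g1] <;> omega
      · rcases hq' with ⟨g1, _⟩ | ⟨g1, _⟩ | ⟨g1, _, _⟩ <;> simp [idx, h1, g1] <;> omega
    · -- p in the column strand: q has same row, so q.2 = 0 = p.2, contradiction
      exfalso
      rcases hq' with ⟨g1, _⟩ | ⟨g1, _⟩ | ⟨g1, _, g3⟩ <;> omega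
  · -- same column
    rcases hq' with ⟨g1, g2⟩ | ⟨g1, g2⟩ | ⟨g1, g2, g3⟩
    · omega
    · -- q = (1, c); p must be (0, c)
      have hp0 : p.1 = 0 := by rcases hp' with ⟨h1, _⟩ | ⟨h1, _⟩ | ⟨h1, _, _⟩ <;> omega
      have hpp : p = (0, q.2) := by
        rw [Prod.ext_iff]
        exact ⟨hp0, hcol⟩
      have hqq : q = (1, q.2) := by
        rw [Prod.ext_iff]
        exact ⟨g1, rfl⟩
      rw [hpp, hqq]
      exact tab_cross01 hn w hw hb hba g2
    · -- q = (r, 0) with r ≥ 2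
      have hp2 : p.2 = 0 := by omega
      have hqq : q = (q.1, 0) := by rw [Prod.ext_iff]; exact ⟨rfl, g3⟩
      rcases hp' with ⟨h1, h2⟩ | ⟨h1, h2⟩ | ⟨h1, h2, h3⟩
      · -- p = (0,0): go through (1,0)
        have hpp : p = (0, 0) := by rw [Prod.ext_iff]; exact ⟨h1, hp2⟩
        rw [hpp, hqq]
        calc tab hn w a b k (0, 0) < tab hn w a b k (1, 0) :=
              tab_cross01 hn w hw hb hba hb
          _ < tab hn w a b k (q.1, 0) := tab_cross12 hn w hw hb g1 g2
      · have hpp : p = (1, 0) := by rw [Prod.ext_iff]; exact ⟨h1, hp2⟩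
        rw [hpp, hqq]
        exact tab_cross12 hn w hw hb g1 g2
      · apply tab_strand_mono hn w hw hp hq
        · have : strand p = 2 := by
            simp only [strand]; rw [if_neg (by omega), if_neg (by omega)]
          have : strand q = 2 := by
            simp only [strand]; rw [if_neg (by omega), if_neg (by omega)]
          simp only [strand]
          rw [if_neg (by omega), if_neg (by omega), if_neg (by omega), if_neg (by omega)]
        · simp only [idx]
          rw [if_neg (by omega), if_neg (by omega)]
          omega

lemma tab_norm : ∀ p ∉ youngCells (shape a b k), ((tab hn w a b k p : Fin n) : ℕ) = 0 := by
  intro p hp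
  rw [tab_notmem hn w hw hp]

end Forward2


section Backward

lemma strand_cases (p : ℕ × ℕ) : strand p = 0 ∨ strand p = 1 ∨ strand p = 2 := by
  unfold strand
  split_ifs <;> simp

lemma strand_zero_iff {p : ℕ × ℕ} : strand p = 0 ↔ p.1 = 0 := by
  unfold strand
  split_ifs with h1 h2 <;> simp_all

lemma strand_one_iff {p : ℕ × ℕ} : strand p = 1 ↔ p.1 = 1 := by
  unfold strand
  split_ifs with h1 h2 <;> simp_all

lemma strand_two_iff {p : ℕ × ℕ} : strand p = 2 ↔ 2 ≤ p.1 := by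
  unfold strand
  split_ifs with h1 h2 <;> simp_all <;> omega

lemma rel_of {a b k : ℕ} {p q : ℕ × ℕ} (hp : p ∈ youngCells (shape a b k))
    (hq : q ∈ youngCells (shape a b k)) (hst : strand p = strand q) (hidx : idx p < idx q) :
    (p.1 = q.1 ∧ p.2 < q.2) ∨ (p.2 = q.2 ∧ p.1 < q.1) := by
  have hp' := mem_cells.mp hp
  have hq' := mem_cells.mp hq
  rcases strand_cases p with hs | hs | hs
  · have e1 : p.1 = 0 := strand_zero_iff.mp hs
    have e2 : q.1 = 0 := strand_zero_iff.mp (hst ▸ hs)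
    left
    refine ⟨by omega, ?_⟩
    unfold idx at hidx
    rw [if_pos (by omega), if_pos (by omega)] at hidx
    exact hidx
  · have e1 : p.1 = 1 := strand_one_iff.mp hs
    have e2 : q.1 = 1 := strand_one_iff.mp (hst ▸ hs)
    left
    refine ⟨by omega, ?_⟩
    unfold idx at hidx
    rw [if_pos (by omega), if_pos (by omega)] at hidx
    exact hidx
  · have e1 : 2 ≤ p.1 := strand_two_iff.mp hs
    have e2 : 2 ≤ q.1 := strand_two_iff.mp (hst ▸ hs)
    have e3 : p.2 = 0 := by rcases hp' with ⟨h1,_⟩|⟨h1,_⟩|⟨_,_,h3⟩ <;> omega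
    have e4 : q.2 = 0 := by rcases hq' with ⟨h1,_⟩|⟨h1,_⟩|⟨_,_,h3⟩ <;> omega
    right
    refine ⟨by omega, ?_⟩
    unfold idx at hidx
    rw [if_neg (by omega), if_neg (by omega)] at hidx
    omega

lemma strand_filter_card (a b k : ℕ) (s : Fin 3) :
    ((youngCells (shape a b k)).filter fun p => strand p = s).card = scount a b k s := by
  classical
  rw [← Finset.card_range (scount a b k s)]
  apply Finset.card_bij' (fun p _ => idx p) (fun c _ => cellOf s c)
  · intro p hp
    simp only [Finset.mem_filter] at hp
    rw [Finset.mem_range, ← hp.2]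
    exact idx_lt_scount hp.1
  · intro c hc
    simp only [Finset.mem_filter]
    rw [Finset.mem_range] at hc
    exact ⟨cellOf_mem.mpr hc, strand_cellOf s c⟩
  · intro p hp
    simp only [Finset.mem_filter] at hp
    rw [← hp.2]
    exact cellOf_strand_idx hp.1
  · intro c _
    exact idx_cellOf s c

end Backward

lemma sytCount_eq_Pc (a b k : ℕ) (hb : 1 ≤ b) (hba : b ≤ a) :
    sytCount (a+b+k) (shape a b k) = Pc (a+b+k) a b k := by
  classical
  set n := a + b + k with hnn
  have hn : 0 < n := by omega
  symm
  apply Nat.card_eq_of_bijective (fun w : WT n a b k =>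
    (⟨tab hn w.1 a b k, tab_isTableau hn w.1 w.2, tab_isStandard hn w.1 w.2 hb hba,
      tab_norm hn w.1 w.2⟩ :
      {E : ℕ × ℕ → Fin n // IsTableau n (shape a b k) E ∧ IsStandard n (shape a b k) E ∧
        ∀ p ∉ youngCells (shape a b k), (E p : ℕ) = 0}))
  constructor
  · -- injective
    intro w w' h
    apply Subtype.ext
    funext t
    have hval : tab hn w.1 a b k = tab hn w'.1 a b k := congrArg Subtype.val h
    obtain ⟨hm, he⟩ := tab_surj hn w.1 w.2 t
    obtain ⟨hm', he'⟩ := tab_surj hn w'.1 w'.2 t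
    have he'' : tab hn w.1 a b k (cellOf (w'.1 t) (cnt w'.1 (w'.1 t) (t : ℕ))) = t := by
      rw [hval]; exact he'
    have hpp := tab_inj hn w.1 w.2 hm hm' (by rw [he, he''])
    have := congrArg strand hpp
    rwa [strand_cellOf, strand_cellOf] at this
  · -- surjective
    rintro ⟨E, hT, hS, hN⟩
    have hsurj : ∀ t : Fin n, ∃ p, p ∈ youngCells (shape a b k) ∧ E p = t := by
      intro t
      obtain ⟨p, hp, he⟩ := hT.2.2 (Set.mem_univ t)
      exact ⟨p, hp, he⟩
    choose P hP1 hP2 using hsurj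
    set w : Fin n → Fin 3 := fun t => strand (P t) with hwdef
    have hPE : ∀ p ∈ youngCells (shape a b k), P (E p) = p := by
      intro p hp
      exact hT.2.1 (hP1 _) hp (hP2 (E p))
    have hwE : ∀ p ∈ youngCells (shape a b k), w (E p) = strand p := by
      intro p hp
      show strand (P (E p)) = strand p
      rw [hPE p hp]
    have hcnt : ∀ (s : Fin 3) (j : ℕ), cnt w s j
        = ((youngCells (shape a b k)).filter fun p => strand p = s ∧ ((E p : Fin n) : ℕ) < j).card := by
      intro s j
      unfold cnt
      apply Finset.card_nbij (fun t => P t)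
      · intro t ht
        simp only [Finset.mem_coe, Finset.mem_filter, Finset.mem_univ, true_and] at ht ⊢
        refine ⟨hP1 t, ht.2, ?_⟩
        rw [hP2 t]
        exact ht.1
      · intro t ht t' ht' hPt
        have h := congrArg E hPt
        simp only [hP2] at h
        exact h
      · intro p hp
        simp only [Finset.coe_filter, Set.mem_setOf_eq, Finset.mem_univ, true_and] at hp
        refine ⟨E p, ?_, hPE p hp.1⟩
        simp only [Finset.mem_coe, Finset.mem_filter, Finset.mem_univ, true_and]
        exact ⟨hp.2.2, (hwE p hp.1).trans hp.2.1⟩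
    have hcnt_top : ∀ s : Fin 3, cnt w s n = scount a b k s := by
      intro s
      rw [hcnt s n, ← strand_filter_card a b k s]
      congr 1
      apply Finset.filter_congr
      intro p _
      have : ((E p : Fin n) : ℕ) < n := (E p).isLt
      simp [this]
    have hok : ok w := by
      constructor
      · intro j
        rw [hcnt, hcnt]
        apply Finset.card_le_card_of_injOn (fun p => ((0:ℕ), p.2))
        · intro p hp
          simp only [Finset.mem_coe, Finset.mem_filter] at hp ⊢
          obtain ⟨hmem, hst, hlt⟩ := hp
          have h1 : p.1 = 1 := strand_one_iff.mp hst
          have h2 : p.2 < b := by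
            rcases mem_cells.mp hmem with ⟨g1,g2⟩|⟨g1,g2⟩|⟨g1,_,_⟩ <;> omega
          have hm0 : ((0:ℕ), p.2) ∈ youngCells (shape a b k) :=
            mem_cells.mpr (Or.inl ⟨rfl, by omega⟩)
          refine ⟨hm0, strand_zero_iff.mpr rfl, ?_⟩
          have := hS _ hm0 p hmem (Or.inr ⟨rfl, by omega⟩)
          omega
        · intro p hp q hq hpq
          simp only [Finset.mem_coe, Finset.mem_filter] at hp hq
          have h1 : p.1 = 1 := strand_one_iff.mp hp.2.1
          have h2 : q.1 = 1 := strand_one_iff.mp hq.2.1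
          have h3 : p.2 = q.2 := by simpa using congrArg Prod.snd hpq
          rw [Prod.ext_iff]
          exact ⟨by omega, h3⟩
      · intro j hj
        rw [hcnt] at hj ⊢
        obtain ⟨p, hp⟩ := Finset.card_pos.mp hj
        simp only [Finset.mem_filter] at hp
        obtain ⟨hmem, hst, hlt⟩ := hp
        have h1 : 2 ≤ p.1 := strand_two_iff.mp hst
        have h2 : p.2 = 0 := by
          rcases mem_cells.mp hmem with ⟨g1,_⟩|⟨g1,_⟩|⟨_,_,g3⟩ <;> omega
        have hm1 : ((1:ℕ), (0:ℕ)) ∈ youngCells (shape a b k) :=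
          mem_cells.mpr (Or.inr (Or.inl ⟨rfl, hb⟩))
        have hlt1 := hS _ hm1 p hmem (Or.inr ⟨by omega, by omega⟩)
        have hpos : 0 < ((youngCells (shape a b k)).filter
            fun p => strand p = 1 ∧ ((E p : Fin n) : ℕ) < j).card :=
          Finset.card_pos.mpr ⟨((1:ℕ), (0:ℕ)), by
            simp only [Finset.mem_filter]
            exact ⟨hm1, strand_one_iff.mpr rfl, by omega⟩⟩
        omega
    refine ⟨⟨w, hcnt_top 0, hcnt_top 1, hcnt_top 2, hok⟩, ?_⟩
    apply Subtype.ext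
    show tab hn w a b k = E
    funext p
    by_cases hp : p ∈ youngCells (shape a b k)
    · have hidxcnt : cnt w (strand p) ((E p : Fin n) : ℕ) = idx p := by
        rw [hcnt]
        rw [← Finset.card_range (idx p)]
        apply Finset.card_bij' (fun q _ => idx q) (fun c _ => cellOf (strand p) c)
        · intro q hq
          simp only [Finset.mem_filter] at hq
          obtain ⟨hqm, hqs, hqlt⟩ := hq
          rw [Finset.mem_range]
          by_contra hge
          push_neg at hge
          rcases eq_or_lt_of_le hge with heq | hlt2
          · have : q = p := by
              rw [← cellOf_strand_idx hqm, ← cellOf_strand_idx hp, hqs, heq]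
            rw [this] at hqlt
            omega
          · have := hS p hp q hqm (rel_of hp hqm hqs.symm hlt2)
            omega
        · intro c hc
          rw [Finset.mem_range] at hc
          simp only [Finset.mem_filter]
          have hcm : cellOf (strand p) c ∈ youngCells (shape a b k) :=
            cellOf_mem.mpr (lt_trans hc (idx_lt_scount hp))
          refine ⟨hcm, strand_cellOf _ _, ?_⟩
          have hrel : E (cellOf (strand p) c) < E p := by
            have := hS _ hcm p hp (rel_of hcm hp (by rw [strand_cellOf]) (by rw [idx_cellOf]; exact hc))
            exact this
          exact hrel
        · intro q hq
          simp only [Finset.mem_filter] at hq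
          rw [← hq.2.1]
          exact cellOf_strand_idx hq.1
        · intro c _
          exact idx_cellOf _ c
      have hex : p ∈ youngCells (shape a b k) ∧
          ∃ t : Fin n, w t = strand p ∧ cnt w (strand p) (t : ℕ) = idx p :=
        ⟨hp, E p, hwE p hp, hidxcnt⟩
      rw [tab, dif_pos hex]
      have spec := hex.2.choose_spec
      exact cnt_inj w spec.1 (hwE p hp) (by rw [spec.2, hidxcnt])
    · rw [tab, dif_neg (by tauto)]
      have := hN p hp
      exact Fin.ext (by rw [this])


lemma sytCount_eq_F (a b k : ℕ) (hb : 1 ≤ b) (hba : b ≤ a) :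
    (sytCount (a+b+k) (shape a b k) : ℚ) = F a b k := by
  rw [sytCount_eq_Pc a b k hb hba]
  exact Pc_eq_F (a+b+k) a b k rfl hb hba

end SYTaux

/-- For integers `n, d, i` with `d ≥ 2` and `n−2d+2 ≤ i ≤ n−d`, the number of standard
Young tableaux of shape `(d−1, n−d−i+1, 1^i)` equals
`n!·(2d−n+i−1) / ((n−d−i)!·(d−1)!·i!·(n−d+1)·(d+i))`. -/
theorem sytCount_second_strand (n d i : ℕ) (hd : 2 ≤ d) (hi₁ : n + 2 ≤ 2 * d + i)
    (hi₂ : d + i ≤ n) :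
    (sytCount n ((d - 1) :: (n - d - i + 1) :: List.replicate i 1) : ℚ)
      = (n.factorial : ℚ) * (2 * (d : ℚ) - n + i - 1) /
          (((n - d - i).factorial : ℚ) * ((d - 1).factorial : ℚ) * (i.factorial : ℚ) *
            ((n - d + 1 : ℕ) : ℚ) * ((d + i : ℕ) : ℚ)) := by
  have hsum : (d - 1) + (n - d - i + 1) + i = n := by omega
  have key := SYTaux.sytCount_eq_F (d-1) (n-d-i+1) i (by omega) (by omega)
  rw [hsum] at key
  rw [show ((d-1) :: (n-d-i+1) :: List.replicate i 1) = SYTaux.shape (d-1) (n-d-i+1) i from rfl,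
    key]
  unfold SYTaux.F
  rw [hsum]
  rw [show n - d - i + 1 - 1 = n - d - i from by omega]
  have c1 : ((d - 1 : ℕ) : ℚ) = (d : ℚ) - 1 := by
    rw [Nat.cast_sub (by omega)]
    norm_num
  have c2 : ((n - d - i : ℕ) : ℚ) = (n : ℚ) - d - i := by
    rw [Nat.sub_sub, Nat.cast_sub (by omega)]
    push_cast
    ring
  have c3 : ((n - d : ℕ) : ℚ) = (n : ℚ) - d := by
    rw [Nat.cast_sub (by omega)]
  push_cast [c1, c2, c3]
  ring


end
end

section
/- Let n, d, i be integers with d ≥ 1 and 1 ≤ i ≤ n−2d. Let V ⊆ R be the K-span of {f_T : T ∈ Tab(n−d−i, d, 1^i)} and W ⊆ R the K-span of {f_{T'} : T' ∈ Tab(n−d−i+1, d, 1^{i−1})}. Then there exists a K-linear map ∂ : V → W ⊗_K R such that, for every T ∈ Tab(n−d−i, d, 1^i) with first-column entries a_1, …, a_{i+2} listed from top to bottom, ∂(f_T) = Σ_{j=1}^{i+2} (−1)^{j−1} f_{T^j} ⊗ x_{a_j}. (This is nontrivial because the polynomials f_T are linearly dependent.) -/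
open MvPolynomial TensorProduct

noncomputable section

/-- The Specht polynomial of a filling `E` of the diagram of `lam`:
the product of all `xᵢ - xⱼ` where `i` sits strictly above `j` in the same column. -/
def spechtPoly (K : Type*) [Field K] (n : ℕ) (lam : List ℕ) (E : ℕ × ℕ → Fin n) :
    MvPolynomial (Fin n) K :=
  ∏ p ∈ youngCells lam, ∏ q ∈ youngCells lam,
    if p.2 = q.2 ∧ p.1 < q.1 then X (E p) - X (E q) else 1

/-- The K-span of the Specht polynomials of shape `lam`. -/
def spechtSpan (K : Type*) [Field K] (n : ℕ) (lam : List ℕ) :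
    Submodule K (MvPolynomial (Fin n) K) :=
  Submodule.span K {f | ∃ E, IsTableau n lam E ∧ f = spechtPoly K n lam E}

/-- The Specht ideal of shape `lam`. -/
def spechtIdeal (K : Type*) [Field K] (n : ℕ) (lam : List ℕ) :
    Ideal (MvPolynomial (Fin n) K) :=
  Ideal.span {f | ∃ E, IsTableau n lam E ∧ f = spechtPoly K n lam E}

/-- `lam` is a partition of `n`. -/
def IsPartitionOf (n : ℕ) (lam : List ℕ) : Prop :=
  lam.Pairwise (· ≥ ·) ∧ (∀ x ∈ lam, 0 < x) ∧ lam.sum = n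

/-- Given a filling `E` of a shape whose first row has length `m`, `delColAppendRow1 m j E`
is the filling obtained by deleting the entry in position `j` (0-indexed) of the first
column (the entries below it moving up) and appending it at the right end of the first
row (i.e. in the new cell `(0, m)`). -/
def delColAppendRow1 {n : ℕ} (m j : ℕ) (E : ℕ × ℕ → Fin n) : ℕ × ℕ → Fin n := fun p =>
  if p.2 = 0 then (if p.1 < j then E p else E (p.1 + 1, 0))
  else if p.1 = 0 ∧ p.2 = m then E (j, 0) else E p

/-- Given a filling `E` of a shape whose first two rows have length `m`, and `j < k`,
`delColTwoAppendCol m j k E` is the filling obtained by deleting the entries in positions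
`j` and `k` (0-indexed) of the first column (the remaining entries moving up) and
appending a new last column of length 2 (at column index `m`), with the `j`-th entry in
the first row and the `k`-th entry in the second row. -/
def delColTwoAppendCol {n : ℕ} (m j k : ℕ) (E : ℕ × ℕ → Fin n) : ℕ × ℕ → Fin n := fun p =>
  if p.2 = 0 then
    (if p.1 < j then E p else if p.1 + 1 < k then E (p.1 + 1, 0) else E (p.1 + 2, 0))
  else if p.1 = 0 ∧ p.2 = m then E (j, 0)
  else if p.1 = 1 ∧ p.2 = m then E (k, 0)
  else E p

/-- Given a filling `E` of a shape whose second row has length `m`, `delColAppendRow2 m j E`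
is the filling obtained by deleting the entry in position `j` (0-indexed) of the first
column (the entries below it moving up) and appending it at the right end of the second
row (i.e. in the new cell `(1, m)`). -/
def delColAppendRow2 {n : ℕ} (m j : ℕ) (E : ℕ × ℕ → Fin n) : ℕ × ℕ → Fin n := fun p =>
  if p.2 = 0 then (if p.1 < j then E p else E (p.1 + 1, 0))
  else if p.1 = 1 ∧ p.2 = m then E (j, 0) else E p

end
namespace SpechtAux

open Finset

lemma mem_youngCells {lam : List ℕ} {p : ℕ × ℕ} :
    p ∈ youngCells lam ↔ p.1 < lam.length ∧ p.2 < lam.getD p.1 0 := by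
  constructor
  · intro hp
    simp only [youngCells, Finset.mem_biUnion, Finset.mem_range, Finset.mem_image] at hp
    obtain ⟨r, hr, c, hc, rfl⟩ := hp
    exact ⟨hr, hc⟩
  · intro ⟨h1, h2⟩
    simp only [youngCells, Finset.mem_biUnion, Finset.mem_range, Finset.mem_image]
    exact ⟨p.1, h1, p.2, h2, rfl⟩

lemma getD_replicate' (k r : ℕ) : (List.replicate k (1 : ℕ)).getD r 0 = if r < k then 1 else 0 := by
  induction k generalizing r with
  | zero => simp [List.getD]
  | succ k ih =>
    rw [List.replicate_succ]
    match r with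
    | 0 => simp
    | r + 1 => rw [List.getD_cons_succ, ih]; simp [Nat.succ_lt_succ_iff]

lemma getD_abk (a b k r : ℕ) :
    ((a :: b :: List.replicate k 1).getD r 0)
      = if r = 0 then a else if r = 1 then b else if r < k + 2 then 1 else 0 := by
  match r with
  | 0 => rfl
  | 1 => rfl
  | r + 2 =>
    rw [List.getD_cons_succ, List.getD_cons_succ, getD_replicate']
    simp only [Nat.add_eq, if_neg (by omega : ¬ r + 2 = 0), if_neg (by omega : ¬ r + 2 = 1)]
    by_cases h : r < k
    · rw [if_pos h, if_pos (by omega)]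
    · rw [if_neg h, if_neg (by omega)]

lemma mem_cells_abk {a b k : ℕ} (ha : 1 ≤ a) (hb : 1 ≤ b) {p : ℕ × ℕ} :
    p ∈ youngCells (a :: b :: List.replicate k 1) ↔
      (p.1 = 0 ∧ p.2 < a) ∨ (p.1 = 1 ∧ p.2 < b) ∨ (2 ≤ p.1 ∧ p.1 < k + 2 ∧ p.2 = 0) := by
  rw [mem_youngCells]
  have hl : (a :: b :: List.replicate k 1).length = k + 2 := by simp
  rw [hl, getD_abk]
  split_ifs with h0 h1 h2 <;> omega

end SpechtAux
noncomputable section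

namespace SpechtAux

open Finset MvPolynomial

variable (K : Type*) [Field K] (n : ℕ)

def colProdX (m : ℕ) (E : ℕ × ℕ → Fin n) : MvPolynomial (Fin n) K :=
  ∏ r ∈ Finset.range m, ∏ s ∈ Finset.range m,
    if r < s then X (E (r,0)) - X (E (s,0)) else 1

def rowProdX (b : ℕ) (E : ℕ × ℕ → Fin n) : MvPolynomial (Fin n) K :=
  ∏ c ∈ Finset.Ico 1 b, (X (E (0,c)) - X (E (1,c)))

lemma spechtPoly_abk (a b k : ℕ) (hb : 1 ≤ b) (hba : b ≤ a) (E : ℕ × ℕ → Fin n) :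
    spechtPoly K n (a :: b :: List.replicate k 1) E
      = colProdX K n (k+2) E * rowProdX K n b E := by
  classical
  have ha : 1 ≤ a := le_trans hb hba
  set S := youngCells (a :: b :: List.replicate k 1) with hS
  rw [spechtPoly, ← Finset.prod_product', ← Finset.prod_filter]
  have hset : ((S ×ˢ S).filter (fun z => z.1.2 = z.2.2 ∧ z.1.1 < z.2.1))
      = (((Finset.range (k+2) ×ˢ Finset.range (k+2)).filter (fun z => z.1 < z.2)).image
          (fun z => ((z.1, 0), (z.2, 0))))
        ∪ ((Finset.Ico 1 b).image (fun c => ((0, c), (1, c)))) := by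
    ext ⟨⟨r1, c1⟩, ⟨r2, c2⟩⟩
    simp only [Finset.mem_filter, Finset.mem_product, hS, mem_cells_abk ha hb,
      Finset.mem_union, Finset.mem_image, Finset.mem_range, Finset.mem_Ico, Prod.mk.injEq,
      Prod.exists]
    constructor
    · rintro ⟨⟨hp, hq⟩, hcc, hrr⟩
      by_cases h : c1 = 0
      · exact Or.inl ⟨r1, r2, ⟨⟨by omega, by omega⟩, hrr⟩, ⟨rfl, by omega⟩, rfl, by omega⟩
      · exact Or.inr ⟨c1, ⟨by omega, by omega⟩, ⟨by omega, rfl⟩, by omega, by omega⟩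
    · rintro (⟨r, s, ⟨⟨hr, hs⟩, hrs⟩, ⟨h1, h2⟩, h3, h4⟩ | ⟨c, ⟨hc1, hc2⟩, ⟨h1, h2⟩, h3, h4⟩) <;>
        refine ⟨⟨?_, ?_⟩, by omega, by omega⟩ <;> omega
  rw [hset]
  have hinj1 : ∀ x ∈ ((Finset.range (k+2) ×ˢ Finset.range (k+2)).filter (fun z => z.1 < z.2)),
      ∀ y ∈ ((Finset.range (k+2) ×ˢ Finset.range (k+2)).filter (fun z => z.1 < z.2)),
      (fun z : ℕ × ℕ => ((z.1, (0:ℕ)), (z.2, (0:ℕ)))) x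
        = (fun z : ℕ × ℕ => ((z.1, (0:ℕ)), (z.2, (0:ℕ)))) y → x = y := by
    intro x _ y _ h
    simp only [Prod.mk.injEq] at h
    exact Prod.ext h.1.1 h.2.1
  have hinj2 : ∀ x ∈ Finset.Ico 1 b, ∀ y ∈ Finset.Ico 1 b,
      (fun c : ℕ => (((0:ℕ), c), ((1:ℕ), c))) x = (fun c : ℕ => (((0:ℕ), c), ((1:ℕ), c))) y
        → x = y := by
    intro x _ y _ h
    simp only [Prod.mk.injEq] at h
    exact h.1.2
  have hdisj : Disjoint
      ((((Finset.range (k+2) ×ˢ Finset.range (k+2)).filter (fun z => z.1 < z.2)).image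
          (fun z => ((z.1, 0), (z.2, 0)))))
      ((Finset.Ico 1 b).image (fun c => ((0, c), (1, c)))) := by
    rw [Finset.disjoint_left]
    rintro ⟨⟨r1, c1⟩, ⟨r2, c2⟩⟩ h1 h2
    simp only [Finset.mem_image, Finset.mem_filter, Finset.mem_product, Finset.mem_range,
      Finset.mem_Ico, Prod.mk.injEq, Prod.exists] at h1 h2
    obtain ⟨r, s, _, ⟨_, hc⟩, _⟩ := h1
    obtain ⟨c, hc', ⟨_, hcc⟩, _⟩ := h2
    omega
  rw [Finset.prod_union hdisj, Finset.prod_image hinj1, Finset.prod_image hinj2,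
    Finset.prod_filter]
  simp only [colProdX, rowProdX]
  rw [← Finset.prod_product']

def polyAtX (a : Fin n) :
    MvPolynomial (Fin n) K →ₐ[K] Polynomial (MvPolynomial (Fin n) K) :=
  aeval (fun b => if b = a then Polynomial.X else Polynomial.C (X b))

lemma polyAtX_X (a c : Fin n) :
    polyAtX K n a (X c) = if c = a then Polynomial.X else Polynomial.C (X c) := by
  simp [polyAtX]

lemma polyAt_rowProdX (aa : Fin n) (b : ℕ) (E : ℕ × ℕ → Fin n)
    (h : ∀ c, 1 ≤ c → c < b → E (0,c) ≠ aa ∧ E (1,c) ≠ aa) :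
    polyAtX K n aa (rowProdX K n b E) = Polynomial.C (rowProdX K n b E) := by
  rw [rowProdX, map_prod, map_prod]
  refine Finset.prod_congr rfl fun c hc => ?_
  rw [Finset.mem_Ico] at hc
  rw [map_sub, map_sub, polyAtX_X, polyAtX_X,
    if_neg (h c hc.1 hc.2).1, if_neg (h c hc.1 hc.2).2]

lemma polyAt_colProdX_const (m : ℕ) (E : ℕ × ℕ → Fin n) (aa : Fin n)
    (h : ∀ r, r < m → E (r,0) ≠ aa) :
    polyAtX K n aa (colProdX K n m E) = Polynomial.C (colProdX K n m E) := by
  rw [colProdX, map_prod, map_prod]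
  refine Finset.prod_congr rfl fun r hr => ?_
  rw [map_prod, map_prod]
  refine Finset.prod_congr rfl fun s hs => ?_
  rw [Finset.mem_range] at hr hs
  split_ifs
  · rw [map_sub, polyAtX_X, polyAtX_X, if_neg (h r hr), if_neg (h s hs), map_sub]
  · rw [map_one, map_one]

lemma polyAt_colProdX (m : ℕ) (E : ℕ × ℕ → Fin n) (aa : Fin n) (j : ℕ) (hj : j < m)
    (hiff : ∀ r, r < m → (E (r,0) = aa ↔ r = j)) :
    polyAtX K n aa (colProdX K n m E)
      = (-1 : Polynomial (MvPolynomial (Fin n) K)) ^ j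
        * (∏ t ∈ (Finset.range m).erase j, (Polynomial.X - Polynomial.C (X (E (t,0)))))
        * Polynomial.C (∏ r ∈ (Finset.range m).erase j, ∏ s ∈ (Finset.range m).erase j,
            if r < s then X (E (r,0)) - X (E (s,0)) else 1) := by
  classical
  have hmem : j ∈ Finset.range m := Finset.mem_range.mpr hj
  set A : ℕ → Polynomial (MvPolynomial (Fin n) K) :=
    fun r => if r = j then Polynomial.X else Polynomial.C (X (E (r,0))) with hA
  have h1 : polyAtX K n aa (colProdX K n m E)
      = ∏ r ∈ Finset.range m, ∏ s ∈ Finset.range m,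
          if r < s then A r - A s else 1 := by
    rw [colProdX, map_prod]
    refine Finset.prod_congr rfl fun r hr => ?_
    rw [map_prod]
    refine Finset.prod_congr rfl fun s hs => ?_
    rw [Finset.mem_range] at hr hs
    split_ifs with h
    · rw [map_sub, polyAtX_X, polyAtX_X]
      simp only [hA, hiff r hr, hiff s hs]
    · rw [map_one]
  have h2 : (∏ r ∈ Finset.range m, ∏ s ∈ Finset.range m, if r < s then A r - A s else 1)
      = (∏ s ∈ (Finset.range m).erase j, if j < s then A j - A s else 1)
        * ((∏ r ∈ (Finset.range m).erase j, if r < j then A r - A j else 1)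
        * ∏ r ∈ (Finset.range m).erase j, ∏ s ∈ (Finset.range m).erase j,
            if r < s then A r - A s else 1) := by
    rw [← Finset.mul_prod_erase _ _ hmem]
    congr 1
    · rw [← Finset.mul_prod_erase _ (fun s => if j < s then A j - A s else 1) hmem,
        if_neg (lt_irrefl j), one_mul]
    · rw [← Finset.prod_mul_distrib]
      refine Finset.prod_congr rfl fun r hr => ?_
      rw [← Finset.mul_prod_erase _ (fun s => if r < s then A r - A s else 1) hmem]
  have piece1 : (∏ s ∈ (Finset.range m).erase j, if j < s then A j - A s else 1)
      = ∏ s ∈ Finset.Ico (j+1) m, (Polynomial.X - Polynomial.C (X (E (s,0)))) := by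
    rw [← Finset.prod_filter]
    have hf : ((Finset.range m).erase j).filter (fun s => j < s) = Finset.Ico (j+1) m := by
      ext t
      simp only [Finset.mem_filter, Finset.mem_erase, Finset.mem_range, Finset.mem_Ico]
      omega
    rw [hf]
    refine Finset.prod_congr rfl fun s hs => ?_
    rw [Finset.mem_Ico] at hs
    simp only [hA, eq_self_iff_true, if_true]
    rw [if_neg (by omega : ¬ s = j)]
  have piece2 : (∏ r ∈ (Finset.range m).erase j, if r < j then A r - A j else 1)
      = (-1 : Polynomial (MvPolynomial (Fin n) K)) ^ j
        * ∏ r ∈ Finset.range j, (Polynomial.X - Polynomial.C (X (E (r,0)))) := by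
    rw [← Finset.prod_filter]
    have hf : ((Finset.range m).erase j).filter (fun r => r < j) = Finset.range j := by
      ext t
      simp only [Finset.mem_filter, Finset.mem_erase, Finset.mem_range]
      omega
    rw [hf]
    have hpt : ∀ r ∈ Finset.range j, A r - A j
        = -1 * (Polynomial.X - Polynomial.C (X (E (r,0)))) := by
      intro r hr
      rw [Finset.mem_range] at hr
      simp only [hA, eq_self_iff_true, if_true]
      rw [if_neg (by omega : ¬ r = j)]
      ring
    rw [Finset.prod_congr rfl hpt, Finset.prod_mul_distrib, Finset.prod_const,
      Finset.card_range]
  have piece3 : (∏ r ∈ (Finset.range m).erase j, ∏ s ∈ (Finset.range m).erase j,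
        if r < s then A r - A s else 1)
      = Polynomial.C (∏ r ∈ (Finset.range m).erase j, ∏ s ∈ (Finset.range m).erase j,
          if r < s then X (E (r,0)) - X (E (s,0)) else 1) := by
    have e1 : ∀ r ∈ (Finset.range m).erase j,
        (∏ s ∈ (Finset.range m).erase j, if r < s then A r - A s else 1)
          = Polynomial.C (∏ s ∈ (Finset.range m).erase j,
              if r < s then X (E (r,0)) - X (E (s,0)) else 1) := by
      intro r hr
      rw [map_prod]
      refine Finset.prod_congr rfl fun s hs => ?_
      rw [Finset.mem_erase] at hr hs
      split_ifs
      · simp only [hA]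
        rw [if_neg hr.1, if_neg hs.1, map_sub]
      · rw [map_one]
    rw [Finset.prod_congr rfl e1, ← map_prod]
  have hsplit : (Finset.range m).erase j = Finset.range j ∪ Finset.Ico (j+1) m := by
    ext t
    simp only [Finset.mem_erase, Finset.mem_range, Finset.mem_union, Finset.mem_Ico]
    omega
  have hdisj : Disjoint (Finset.range j) (Finset.Ico (j+1) m) := by
    rw [Finset.disjoint_left]
    intro t h1 h2
    rw [Finset.mem_range] at h1
    rw [Finset.mem_Ico] at h2
    omega
  have hfin : (∏ t ∈ (Finset.range m).erase j,
      (Polynomial.X - Polynomial.C (X (E (t,0)) : MvPolynomial (Fin n) K)))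
      = (∏ t ∈ Finset.range j, (Polynomial.X - Polynomial.C (X (E (t,0)))))
        * ∏ t ∈ Finset.Ico (j+1) m, (Polynomial.X - Polynomial.C (X (E (t,0)))) := by
    rw [hsplit, Finset.prod_union hdisj]
  rw [h1, h2, piece1, piece2, piece3, hfin]
  ring

lemma colProd_erase_eq (m' j m : ℕ) (hj : j < m + 1) (E : ℕ × ℕ → Fin n) :
    (∏ r ∈ (Finset.range (m+1)).erase j, ∏ s ∈ (Finset.range (m+1)).erase j,
        if r < s then (X (E (r,0)) - X (E (s,0)) : MvPolynomial (Fin n) K) else 1)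
      = colProdX K n m (delColAppendRow1 m' j E) := by
  have hσ : ∀ x y : ℕ, ((if x < j then x else x + 1) < (if y < j then y else y + 1)) ↔ x < y := by
    intro x y; split_ifs <;> omega
  have hE' : ∀ t : ℕ, delColAppendRow1 m' j E (t, 0) = E ((if t < j then t else t + 1), 0) := by
    intro t
    simp only [delColAppendRow1]
    split_ifs <;> rfl
  have him : (Finset.range (m+1)).erase j
      = (Finset.range m).image (fun t => if t < j then t else t + 1) := by
    ext t
    simp only [Finset.mem_erase, Finset.mem_range, Finset.mem_image]
    constructor
    · rintro ⟨htj, htm⟩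
      by_cases h : t < j
      · exact ⟨t, by omega, by rw [if_pos h]⟩
      · refine ⟨t - 1, by omega, ?_⟩
        rw [if_neg (by omega)]
        omega
    · rintro ⟨s, hs, rfl⟩
      constructor <;> split_ifs <;> omega
  have hinj : ∀ x ∈ Finset.range m, ∀ y ∈ Finset.range m,
      (fun t => if t < j then t else t + 1) x = (fun t => if t < j then t else t + 1) y
        → x = y := by
    intro x _ y _ h
    simp only at h
    split_ifs at h <;> omega
  rw [him, Finset.prod_image hinj, colProdX]
  refine Finset.prod_congr rfl fun r hr => ?_
  rw [Finset.prod_image hinj]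
  refine Finset.prod_congr rfl fun s hs => ?_
  rw [hE' r, hE' s]
  by_cases h : r < s
  · rw [if_pos h, if_pos ((hσ r s).mpr h)]
  · rw [if_neg h, if_neg (fun hc => h ((hσ r s).mp hc))]

lemma rowProd_del (b m' j : ℕ) (hb : b ≤ m') (E : ℕ × ℕ → Fin n) :
    rowProdX K n b (delColAppendRow1 m' j E) = rowProdX K n b E := by
  rw [rowProdX, rowProdX]
  refine Finset.prod_congr rfl fun c hc => ?_
  rw [Finset.mem_Ico] at hc
  have h0 : delColAppendRow1 m' j E (0, c) = E (0, c) := by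
    simp only [delColAppendRow1]
    split_ifs <;> first | rfl | omega
  have h1 : delColAppendRow1 m' j E (1, c) = E (1, c) := by
    simp only [delColAppendRow1]
    split_ifs <;> first | rfl | omega
  rw [h0, h1]

lemma cells_abk_pair (m1 d i : ℕ) (h1m : 1 ≤ m1) (hd : 1 ≤ d) (r c : ℕ) :
    ((r, c) ∈ youngCells (m1 :: d :: List.replicate i 1))
      ↔ ((r = 0 ∧ c < m1) ∨ (r = 1 ∧ c < d) ∨ (2 ≤ r ∧ r < i + 2 ∧ c = 0)) :=
  mem_cells_abk h1m hd

lemma coeff_specht_del (m1 d i : ℕ) (hd : 1 ≤ d) (hdm : d ≤ m1) (hi : 1 ≤ i)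
    (E : ℕ × ℕ → Fin n) (hE : IsTableau n (m1 :: d :: List.replicate i 1) E)
    (j : ℕ) (hj : j < i + 2) :
    Polynomial.coeff
        (polyAtX K n (E (j,0)) (spechtPoly K n (m1 :: d :: List.replicate i 1) E)) (i+1)
      = ((-1 : K) ^ j) • spechtPoly K n ((m1+1) :: d :: List.replicate (i-1) 1)
          (delColAppendRow1 m1 j E) := by
  classical
  have h1m : 1 ≤ m1 := le_trans hd hdm
  have hcell := cells_abk_pair m1 d i h1m hd
  have hinj := hE.injOn
  have hiff : ∀ r, r < i + 2 → (E (r,0) = E (j,0) ↔ r = j) := by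
    intro r hr
    constructor
    · intro h
      have h1 : ((r, 0) : ℕ × ℕ) ∈ (youngCells (m1 :: d :: List.replicate i 1) : Set (ℕ × ℕ)) :=
        Finset.mem_coe.mpr ((hcell r 0).mpr (by omega))
      have h2 : ((j, 0) : ℕ × ℕ) ∈ (youngCells (m1 :: d :: List.replicate i 1) : Set (ℕ × ℕ)) :=
        Finset.mem_coe.mpr ((hcell j 0).mpr (by omega))
      have := hinj h1 h2 h
      exact congrArg Prod.fst this
    · intro h; rw [h]
  have hrow : ∀ c, 1 ≤ c → c < d → E (0,c) ≠ E (j,0) ∧ E (1,c) ≠ E (j,0) := by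
    intro c hc1 hc2
    constructor <;> intro h
    · have h1 : ((0, c) : ℕ × ℕ) ∈ (youngCells (m1 :: d :: List.replicate i 1) : Set (ℕ × ℕ)) :=
        Finset.mem_coe.mpr ((hcell 0 c).mpr (by omega))
      have h2 : ((j, 0) : ℕ × ℕ) ∈ (youngCells (m1 :: d :: List.replicate i 1) : Set (ℕ × ℕ)) :=
        Finset.mem_coe.mpr ((hcell j 0).mpr (by omega))
      have := hinj h1 h2 h
      have := congrArg Prod.snd this
      simp only at this
      omega
    · have h1 : ((1, c) : ℕ × ℕ) ∈ (youngCells (m1 :: d :: List.replicate i 1) : Set (ℕ × ℕ)) :=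
        Finset.mem_coe.mpr ((hcell 1 c).mpr (by omega))
      have h2 : ((j, 0) : ℕ × ℕ) ∈ (youngCells (m1 :: d :: List.replicate i 1) : Set (ℕ × ℕ)) :=
        Finset.mem_coe.mpr ((hcell j 0).mpr (by omega))
      have := hinj h1 h2 h
      have := congrArg Prod.snd this
      simp only at this
      omega
  rw [spechtPoly_abk K n m1 d i hd hdm E, map_mul,
    polyAt_colProdX K n (i+2) E (E (j,0)) j hj hiff,
    polyAt_rowProdX K n (E (j,0)) d E hrow]
  set P : Polynomial (MvPolynomial (Fin n) K) :=
    ∏ t ∈ (Finset.range (i+2)).erase j, (Polynomial.X - Polynomial.C (X (E (t,0)))) with hP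
  set g1 : MvPolynomial (Fin n) K :=
    ∏ r ∈ (Finset.range (i+2)).erase j, ∏ s ∈ (Finset.range (i+2)).erase j,
      if r < s then X (E (r,0)) - X (E (s,0)) else 1 with hg1
  have hPm : P.Monic :=
    Polynomial.monic_prod_of_monic _ _ (fun t _ => Polynomial.monic_X_sub_C _)
  have hPdeg : P.natDegree = i + 1 := by
    rw [hP, Polynomial.natDegree_prod_of_monic _ _ (fun t _ => Polynomial.monic_X_sub_C _)]
    have : ∀ t ∈ (Finset.range (i+2)).erase j,
        (Polynomial.X - Polynomial.C (X (E (t,0)) : MvPolynomial (Fin n) K)).natDegree = 1 :=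
      fun t _ => Polynomial.natDegree_X_sub_C _
    rw [Finset.sum_congr rfl this, Finset.sum_const, smul_eq_mul, mul_one,
      Finset.card_erase_of_mem (Finset.mem_range.mpr hj), Finset.card_range]
    omega
  have hre : (-1 : Polynomial (MvPolynomial (Fin n) K)) ^ j * P * Polynomial.C g1
        * Polynomial.C (rowProdX K n d E)
      = Polynomial.C ((-1 : MvPolynomial (Fin n) K) ^ j * (g1 * rowProdX K n d E)) * P := by
    rw [map_mul, map_pow, map_neg, map_one, map_mul]
    ring
  rw [hre, Polynomial.coeff_C_mul, ← hPdeg, hPm.coeff_natDegree, mul_one]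
  have hcol := colProd_erase_eq K n m1 j (i+1) (by omega) E
  have hrow2 := rowProd_del K n d m1 j hdm E
  have hmu : spechtPoly K n ((m1+1) :: d :: List.replicate (i-1) 1) (delColAppendRow1 m1 j E)
      = colProdX K n (i+1) (delColAppendRow1 m1 j E)
        * rowProdX K n d (delColAppendRow1 m1 j E) := by
    rw [spechtPoly_abk K n (m1+1) d (i-1) hd (by omega) (delColAppendRow1 m1 j E)]
    congr 2
    omega
  rw [hmu, hrow2, ← hcol, MvPolynomial.smul_eq_C_mul, map_pow, map_neg, map_one, hg1]

lemma coeff_specht_zero (m1 d i : ℕ) (hd : 1 ≤ d) (hdm : d ≤ m1) (hi : 1 ≤ i)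
    (E : ℕ × ℕ → Fin n) (hE : IsTableau n (m1 :: d :: List.replicate i 1) E)
    (aa : Fin n) (ha : ∀ r, r < i + 2 → E (r,0) ≠ aa) :
    Polynomial.coeff (polyAtX K n aa (spechtPoly K n (m1 :: d :: List.replicate i 1) E)) (i+1)
      = 0 := by
  classical
  have h1m : 1 ≤ m1 := le_trans hd hdm
  have hcell := cells_abk_pair m1 d i h1m hd
  have hinj := hE.injOn
  rw [spechtPoly_abk K n m1 d i hd hdm E, map_mul,
    polyAt_colProdX_const K n (i+2) E aa (fun r hr => ha r hr)]
  apply Polynomial.coeff_eq_zero_of_natDegree_lt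
  have hb1 : (Polynomial.C (colProdX K n (i+2) E)
        * polyAtX K n aa (rowProdX K n d E)).natDegree
      ≤ (polyAtX K n aa (rowProdX K n d E)).natDegree :=
    Polynomial.natDegree_C_mul_le _ _
  have hb2 : (polyAtX K n aa (rowProdX K n d E)).natDegree
      ≤ ∑ c ∈ Finset.Ico 1 d, (if E (0,c) = aa ∨ E (1,c) = aa then 1 else 0) := by
    rw [rowProdX, map_prod]
    refine le_trans (Polynomial.natDegree_prod_le _ _) (Finset.sum_le_sum ?_)
    intro c _
    rw [map_sub, polyAtX_X, polyAtX_X]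
    by_cases h : E (0,c) = aa ∨ E (1,c) = aa
    · rw [if_pos h]
      refine le_trans (Polynomial.natDegree_sub_le _ _) (max_le ?_ ?_) <;>
        · split_ifs
          · exact Polynomial.natDegree_X_le
          · simp [Polynomial.natDegree_C]
    · push_neg at h
      rw [if_neg h.1, if_neg h.2, ← map_sub, Polynomial.natDegree_C]
      exact Nat.zero_le _
  have hb3 : (∑ c ∈ Finset.Ico 1 d, (if E (0,c) = aa ∨ E (1,c) = aa then 1 else 0)) ≤ 1 := by
    rw [Finset.sum_boole]
    rw [Nat.cast_id]
    rw [Finset.card_le_one]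
    intro c hc c' hc'
    rw [Finset.mem_filter, Finset.mem_Ico] at hc hc'
    obtain ⟨⟨hc1, hc2⟩, hcp⟩ := hc
    obtain ⟨⟨hc1', hc2'⟩, hcp'⟩ := hc'
    have key : ∀ r r' : ℕ, r ≤ 1 → r' ≤ 1 → E (r, c) = E (r', c') → c = c' := by
      intro r r' hr hr' h
      have m1' : ((r, c) : ℕ × ℕ) ∈ (youngCells (m1 :: d :: List.replicate i 1) : Set (ℕ × ℕ)) :=
        Finset.mem_coe.mpr ((hcell r c).mpr (by omega))
      have m2' : ((r', c') : ℕ × ℕ) ∈ (youngCells (m1 :: d :: List.replicate i 1) : Set (ℕ × ℕ)) :=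
        Finset.mem_coe.mpr ((hcell r' c').mpr (by omega))
      have := hinj m1' m2' h
      exact congrArg Prod.snd this
    rcases hcp with h0 | h1 <;> rcases hcp' with h0' | h1'
    · exact key 0 0 (by omega) (by omega) (h0.trans h0'.symm)
    · exact key 0 1 (by omega) (by omega) (h0.trans h1'.symm)
    · exact key 1 0 (by omega) (by omega) (h1.trans h0'.symm)
    · exact key 1 1 (by omega) (by omega) (h1.trans h1'.symm)
  omega

lemma tableau_del (m1 d i : ℕ) (hd : 1 ≤ d) (hdm : d ≤ m1) (hi : 1 ≤ i)
    (E : ℕ × ℕ → Fin n) (hE : IsTableau n (m1 :: d :: List.replicate i 1) E)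
    (j : ℕ) (hj : j < i + 2) :
    IsTableau n ((m1+1) :: d :: List.replicate (i-1) 1) (delColAppendRow1 m1 j E) := by
  classical
  have h1m : 1 ≤ m1 := le_trans hd hdm
  have hcL := cells_abk_pair m1 d i h1m hd
  have hcM := cells_abk_pair (m1+1) d (i-1) (by omega) hd
  set σ : ℕ × ℕ → ℕ × ℕ := fun p =>
    if p.2 = 0 then (if p.1 < j then p else (p.1 + 1, 0))
    else if p.1 = 0 ∧ p.2 = m1 then (j, 0) else p with hσ
  have c2 : ∀ p, delColAppendRow1 m1 j E p = E (σ p) := by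
    intro p
    rw [hσ]
    simp only [delColAppendRow1]
    split_ifs <;> rfl
  have c1 : ∀ p : ℕ × ℕ, p ∈ youngCells ((m1+1) :: d :: List.replicate (i-1) 1) →
      σ p ∈ youngCells (m1 :: d :: List.replicate i 1) := by
    rintro ⟨r, c⟩ hp
    rw [hcM r c] at hp
    rw [hσ]
    simp only
    split_ifs with h1 h2 h3
    · rw [hcL r c]; omega
    · rw [hcL (r+1) 0]; omega
    · rw [hcL j 0]; omega
    · rw [hcL r c]; omega
  have c3 : ∀ p q : ℕ × ℕ, p ∈ youngCells ((m1+1) :: d :: List.replicate (i-1) 1) →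
      q ∈ youngCells ((m1+1) :: d :: List.replicate (i-1) 1) → σ p = σ q → p = q := by
    rintro ⟨r, c⟩ ⟨r', c'⟩ hp hq heq
    rw [hcM r c] at hp
    rw [hcM r' c'] at hq
    rw [hσ] at heq
    simp only at heq
    split_ifs at heq <;>
      · simp only [Prod.mk.injEq] at heq
        exact Prod.ext (by omega) (by omega)
  have c4 : ∀ q : ℕ × ℕ, q ∈ youngCells (m1 :: d :: List.replicate i 1) →
      ∃ p, p ∈ youngCells ((m1+1) :: d :: List.replicate (i-1) 1) ∧ σ p = q := by
    rintro ⟨r, c⟩ hq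
    rw [hcL r c] at hq
    by_cases hc : c = 0
    · subst hc
      by_cases h1 : r < j
      · refine ⟨(r, 0), (hcM r 0).mpr (by omega), ?_⟩
        rw [hσ]
        dsimp only
        rw [if_pos rfl, if_pos h1]
      · by_cases h2 : r = j
        · refine ⟨(0, m1), (hcM 0 m1).mpr (by omega), ?_⟩
          rw [hσ]
          dsimp only
          rw [if_neg (by omega : ¬ m1 = 0), if_pos ⟨rfl, rfl⟩]
          exact Prod.ext (by omega) (by omega)
        · refine ⟨(r - 1, 0), (hcM (r-1) 0).mpr (by omega), ?_⟩
          rw [hσ]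
          dsimp only
          rw [if_pos rfl, if_neg (by omega : ¬ r - 1 < j)]
          exact Prod.ext (by omega) (by omega)
    · refine ⟨(r, c), (hcM r c).mpr (by omega), ?_⟩
      rw [hσ]
      dsimp only
      rw [if_neg (by omega : ¬ c = 0), if_neg (by omega : ¬ (r = 0 ∧ c = m1))]
  refine ⟨fun p _ => Set.mem_univ _, ?_, ?_⟩
  · intro p hp q hq h
    refine c3 p q (Finset.mem_coe.mp hp) (Finset.mem_coe.mp hq) ?_
    refine hE.injOn ?_ ?_ ?_
    · exact Finset.mem_coe.mpr (c1 p (Finset.mem_coe.mp hp))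
    · exact Finset.mem_coe.mpr (c1 q (Finset.mem_coe.mp hq))
    · rw [← c2 p, ← c2 q]; exact h
  · intro y _
    obtain ⟨p, hp, hEp⟩ := hE.surjOn (Set.mem_univ y)
    obtain ⟨q, hq, hσq⟩ := c4 p (Finset.mem_coe.mp hp)
    exact ⟨q, Finset.mem_coe.mpr hq, by rw [c2 q, hσq, hEp]⟩

def LmapX (k : ℕ) (a : Fin n) :
    MvPolynomial (Fin n) K →ₗ[K] MvPolynomial (Fin n) K :=
  ((Polynomial.lcoeff (MvPolynomial (Fin n) K) k).restrictScalars K) ∘ₗ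
    (polyAtX K n a).toLinearMap

lemma LmapX_apply (k : ℕ) (a : Fin n) (f : MvPolynomial (Fin n) K) :
    LmapX K n k a f = Polynomial.coeff (polyAtX K n a f) k := rfl

lemma LmapX_mem (m1 d i : ℕ) (hd : 1 ≤ d) (hdm : d ≤ m1) (hi : 1 ≤ i) (a : Fin n)
    (f : MvPolynomial (Fin n) K) (hf : f ∈ spechtSpan K n (m1 :: d :: List.replicate i 1)) :
    LmapX K n (i+1) a f ∈ spechtSpan K n ((m1+1) :: d :: List.replicate (i-1) 1) := by
  classical
  refine Submodule.span_induction (p := fun x _ =>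
    LmapX K n (i+1) a x ∈ spechtSpan K n ((m1+1) :: d :: List.replicate (i-1) 1))
    ?_ ?_ ?_ ?_ hf
  · rintro x ⟨E0, hE0, rfl⟩
    by_cases hcase : ∃ r, r < i + 2 ∧ E0 (r, 0) = a
    · obtain ⟨r, hr, hra⟩ := hcase
      rw [LmapX_apply, ← hra, coeff_specht_del K n m1 d i hd hdm hi E0 hE0 r hr]
      exact Submodule.smul_mem _ _ (Submodule.subset_span
        ⟨delColAppendRow1 m1 r E0, tableau_del n m1 d i hd hdm hi E0 hE0 r hr, rfl⟩)
    · push_neg at hcase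
      rw [LmapX_apply, coeff_specht_zero K n m1 d i hd hdm hi E0 hE0 a
        (fun r hr => hcase r hr)]
      exact Submodule.zero_mem _
  · show LmapX K n (i+1) a (0 : MvPolynomial (Fin n) K)
        ∈ spechtSpan K n ((m1+1) :: d :: List.replicate (i-1) 1)
    rw [map_zero]; exact Submodule.zero_mem _
  · intro x y _ _ hx hy
    show LmapX K n (i+1) a (x + y)
        ∈ spechtSpan K n ((m1+1) :: d :: List.replicate (i-1) 1)
    rw [map_add]; exact Submodule.add_mem _ hx hy
  · intro c x _ hx
    show LmapX K n (i+1) a (c • x)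
        ∈ spechtSpan K n ((m1+1) :: d :: List.replicate (i-1) 1)
    rw [map_smul]; exact Submodule.smul_mem _ _ hx

end SpechtAux
end


open TensorProduct in
/-- Well-definedness of the differential maps of the `d`-linear strand of the resolution:
for `1 ≤ i ≤ n − 2d`, there is a `K`-linear map `∂ : V → W ⊗ R`, where `V` is the span of
the Specht polynomials of shape `(n−d−i, d, 1^i)` and `W` the span of those of shape
`(n−d−i+1, d, 1^{i−1})`, with `∂(f_T) = Σ_{j=1}^{i+2} (−1)^{j−1} f_{T^j} ⊗ x_{a_j}` for
every tableau `T` of shape `(n−d−i, d, 1^i)` with first-column entries `a_1, …, a_{i+2}`. -/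
theorem specht_differential_wellDefined_linear_strand (K : Type*) [Field K] [CharZero K]
    (n d i : ℕ) (hd : 1 ≤ d) (hi : 1 ≤ i) (hni : 2 * d + i ≤ n) :
    ∃ D : spechtSpan K n ((n - d - i) :: d :: List.replicate i 1) →ₗ[K]
        (spechtSpan K n ((n - d - i + 1) :: d :: List.replicate (i - 1) 1) ⊗[K]
          MvPolynomial (Fin n) K),
      ∀ E : ℕ × ℕ → Fin n, IsTableau n ((n - d - i) :: d :: List.replicate i 1) E →
      ∀ v : spechtSpan K n ((n - d - i) :: d :: List.replicate i 1),
        (v : MvPolynomial (Fin n) K) = spechtPoly K n ((n - d - i) :: d :: List.replicate i 1) E →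
      ∀ w : Fin (i + 2) → spechtSpan K n ((n - d - i + 1) :: d :: List.replicate (i - 1) 1),
        (∀ j : Fin (i + 2), (w j : MvPolynomial (Fin n) K)
            = spechtPoly K n ((n - d - i + 1) :: d :: List.replicate (i - 1) 1)
                (delColAppendRow1 (n - d - i) (j : ℕ) E)) →
      D v = ∑ j : Fin (i + 2),
        ((-1 : K) ^ (j : ℕ)) • (w j ⊗ₜ[K] MvPolynomial.X (E ((j : ℕ), 0))) := by
  classical
  set m1 := n - d - i with hm1
  have hdm : d ≤ m1 := by omega
  set V := spechtSpan K n (m1 :: d :: List.replicate i 1) with hV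
  set W := spechtSpan K n ((m1 + 1) :: d :: List.replicate (i - 1) 1) with hW
  set Lres : Fin n → (V →ₗ[K] W) := fun a =>
    LinearMap.codRestrict W ((SpechtAux.LmapX K n (i+1) a).comp V.subtype)
      (fun v => SpechtAux.LmapX_mem K n m1 d i hd hdm hi a (v : MvPolynomial (Fin n) K) v.2)
    with hLres
  refine ⟨∑ a : Fin n,
    ((TensorProduct.mk K W (MvPolynomial (Fin n) K)).flip (X a)) ∘ₗ Lres a, ?_⟩
  intro E hE v hv w hw
  rw [LinearMap.sum_apply]
  have hLresCoe : ∀ a : Fin n, ((Lres a v : W) : MvPolynomial (Fin n) K)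
      = Polynomial.coeff (SpechtAux.polyAtX K n a (v : MvPolynomial (Fin n) K)) (i+1) := by
    intro a
    rw [hLres]
    rfl
  have hterm0 : ∀ a : Fin n, (∀ r, r < i + 2 → E (r,0) ≠ a) →
      (((TensorProduct.mk K W (MvPolynomial (Fin n) K)).flip (X a)) ∘ₗ Lres a) v = 0 := by
    intro a ha
    have hz : Lres a v = 0 := by
      apply Subtype.ext
      rw [hLresCoe a, hv,
        SpechtAux.coeff_specht_zero K n m1 d i hd hdm hi E hE a ha]
      rfl
    rw [LinearMap.comp_apply, hz, map_zero]
  have hterm1 : ∀ j : Fin (i+2),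
      (((TensorProduct.mk K W (MvPolynomial (Fin n) K)).flip (X (E ((j:ℕ),0)))) ∘ₗ
          Lres (E ((j:ℕ),0))) v
        = ((-1 : K) ^ (j:ℕ)) • (w j ⊗ₜ[K] X (E ((j:ℕ),0))) := by
    intro j
    have hLv : Lres (E ((j:ℕ),0)) v = ((-1 : K) ^ (j:ℕ)) • w j := by
      apply Subtype.ext
      rw [hLresCoe, hv,
        SpechtAux.coeff_specht_del K n m1 d i hd hdm hi E hE (j:ℕ) j.2,
        Submodule.coe_smul, hw j]
    rw [LinearMap.comp_apply, hLv, map_smul]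
    simp only [LinearMap.flip_apply, TensorProduct.mk_apply]
  set g : Fin (i+2) → Fin n := fun j => E ((j:ℕ), 0) with hg
  have hcell := SpechtAux.cells_abk_pair m1 d i (by omega) hd
  have hginj : ∀ x ∈ (Finset.univ : Finset (Fin (i+2))),
      ∀ y ∈ (Finset.univ : Finset (Fin (i+2))), g x = g y → x = y := by
    intro x _ y _ hxy
    have h1 : (((x:ℕ), 0) : ℕ×ℕ) ∈ (youngCells (m1 :: d :: List.replicate i 1) : Set (ℕ×ℕ)) :=
      Finset.mem_coe.mpr ((hcell (x:ℕ) 0).mpr (by rcases x with ⟨x, hx⟩; simp; omega))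
    have h2 : (((y:ℕ), 0) : ℕ×ℕ) ∈ (youngCells (m1 :: d :: List.replicate i 1) : Set (ℕ×ℕ)) :=
      Finset.mem_coe.mpr ((hcell (y:ℕ) 0).mpr (by rcases y with ⟨y, hy⟩; simp; omega))
    have h3 := hE.injOn h1 h2 hxy
    have h4 := congrArg Prod.fst h3
    exact Fin.ext h4
  have hsub : (∑ a : Fin n,
        (((TensorProduct.mk K W (MvPolynomial (Fin n) K)).flip (X a)) ∘ₗ Lres a) v)
      = ∑ a ∈ Finset.univ.image g,
        (((TensorProduct.mk K W (MvPolynomial (Fin n) K)).flip (X a)) ∘ₗ Lres a) v := by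
    refine (Finset.sum_subset (Finset.subset_univ _) ?_).symm
    intro a _ ha
    refine hterm0 a ?_
    intro r hr hra
    exact ha (Finset.mem_image.mpr ⟨⟨r, hr⟩, Finset.mem_univ _, by rw [hg]; exact hra⟩)
  rw [hsub, Finset.sum_image hginj]
  exact Finset.sum_congr rfl (fun j _ => hterm1 j)
end
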